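/- arXiv:1612.01508 — 6 statements merged into one kernel-verified Lean document; each statement's English description precedes it below -/
import Mathlib

section
/- Let Θ*∈S^d be positive definite and let Z∈S^{d+1} be positive semidefinite. Then the function (h,H) ↦ Γ(h,H;Z) is convex on the convex set {(h,H): h∈ℝ^d, H∈S^d, H≺Θ*^{−1}}. -/
open Matrix MeasureTheory Real Filter

noncomputable section

/-- Frobenius norm of a matrix. -/
def frobNorm {d : ℕ} (A : Matrix (Fin d) (Fin d) ℝ) : ℝ :=
  Real.sqrt (∑ i, ∑ j, (A i j) ^ 2)

/-- Spectral norm of a matrix. -/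
def specNorm {d : ℕ} (A : Matrix (Fin d) (Fin d) ℝ) : ℝ :=
  ‖Matrix.toEuclideanCLM (𝕜 := ℝ) A‖

open scoped Classical in
/-- The square root of a positive semidefinite real matrix (junk value `0` otherwise). -/
def msqrt {d : ℕ} (A : Matrix (Fin d) (Fin d) ℝ) : Matrix (Fin d) (Fin d) ℝ :=
  if h : A.PosSemidef then (h.1.eigenvectorUnitary : Matrix (Fin d) (Fin d) ℝ) *
    diagonal ((↑) ∘ Real.sqrt ∘ h.1.eigenvalues) * (star h.1.eigenvectorUnitary : Matrix (Fin d) (Fin d) ℝ) else 0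

/-- The standard Gaussian distribution on ℝ^d. -/
def stdGaussian (d : ℕ) : Measure (Fin d → ℝ) :=
  Measure.pi fun _ => ProbabilityTheory.gaussianReal 0 1

/-- The Gaussian distribution `N(θ,Θ)` on ℝ^d: the law of `θ + Θ^{1/2} ξ`. -/
def gaussianVec {d : ℕ} (θ : Fin d → ℝ) (Θ : Matrix (Fin d) (Fin d) ℝ) :
    Measure (Fin d → ℝ) :=
  (stdGaussian d).map (fun ξ => θ + (msqrt Θ).mulVec ξ)

/-- The (d+1)×(d+1) symmetric matrix `[[H,h];[hᵀ,0]]`. -/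
def liftSym {d : ℕ} (H : Matrix (Fin d) (Fin d) ℝ) (h : Fin d → ℝ) :
    Matrix (Fin (d+1)) (Fin (d+1)) ℝ := fun i j =>
  if hi : (i : ℕ) < d then
    if hj : (j : ℕ) < d then H ⟨i, hi⟩ ⟨j, hj⟩ else h ⟨i, hi⟩
  else if hj : (j : ℕ) < d then h ⟨j, hj⟩ else 0

/-- The d×(d+1) matrix `[H,h]`. -/
def liftRect {d : ℕ} (H : Matrix (Fin d) (Fin d) ℝ) (h : Fin d → ℝ) :
    Matrix (Fin d) (Fin (d+1)) ℝ := fun i j =>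
  if hj : (j : ℕ) < d then H i ⟨j, hj⟩ else h i

/-- The vector `[θ;1] ∈ ℝ^{d+1}`. -/
def append1 {d : ℕ} (θ : Fin d → ℝ) : Fin (d+1) → ℝ := fun i =>
  if hi : (i : ℕ) < d then θ ⟨i, hi⟩ else 1

/-- `Υ(H;Θ)`. -/
def Upsilon {d : ℕ} (Θstar : Matrix (Fin d) (Fin d) ℝ) (δ : ℝ)
    (H Θ : Matrix (Fin d) (Fin d) ℝ) : ℝ :=
  -(1/2) * Real.log ((1 - msqrt Θstar * H * msqrt Θstar).det)
  + (1/2) * ((Θ - Θstar) * H).trace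
  + δ * (2 + δ) * (frobNorm (msqrt Θstar * H * msqrt Θstar)) ^ 2
      / (2 * (1 - specNorm (msqrt Θstar * H * msqrt Θstar)))

/-- `Γ(h,H;Z)`. -/
def Gammaf {d : ℕ} (Θstar : Matrix (Fin d) (Fin d) ℝ) (h : Fin d → ℝ)
    (H : Matrix (Fin d) (Fin d) ℝ) (Z : Matrix (Fin (d+1)) (Fin (d+1)) ℝ) : ℝ :=
  (1/2) * (Z * (liftSym H h + (liftRect H h)ᵀ * (Θstar⁻¹ - H)⁻¹ * liftRect H h)).trace

/-- `Φ(h,H;Θ,Z) = Υ(H;Θ) + Γ(h,H;Z)`. -/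
def PhiG {d : ℕ} (Θstar : Matrix (Fin d) (Fin d) ℝ) (δ : ℝ) (h : Fin d → ℝ)
    (H Θ : Matrix (Fin d) (Fin d) ℝ) (Z : Matrix (Fin (d+1)) (Fin (d+1)) ℝ) : ℝ :=
  Upsilon Θstar δ H Θ + Gammaf Θstar h H Z

/-!
`Γ` is the sum of a linear function of `(h, H)` and `½ tr(Z Xᵀ A⁻¹ X)`, where `X = [H, h]` is
linear and `A = Θ*⁻¹ - H` affine in `(h, H)`. The matrix-fractional map `(X, A) ↦ Xᵀ A⁻¹ X` is
jointly convex in the Loewner order on `A ≻ 0`: by the Schur complement criterion the block matrix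
`[[A, X]; [Xᵀ, Xᵀ A⁻¹ X]]` is positive semidefinite, a convex combination of such blocks is again
positive semidefinite, and its Schur complement is the convexity defect. Since `Z ⪰ 0`, the map
`M ↦ tr(Z M)` is monotone in the Loewner order, which carries the inequality over to traces.
-/

theorem sub_combo_eq_combo_sub {E : Type*} [AddCommGroup E] [Module ℝ E] (T x y : E) {a b : ℝ}
    (hab : a + b = 1) : T - (a • x + b • y) = a • (T - x) + b • (T - y) := by
  rw [smul_sub, smul_sub, sub_add_sub_comm, Convex.combo_self hab]

namespace Matrix

variable {m n : Type*}

theorem convex_setOf_isSymm : Convex ℝ {H : Matrix n n ℝ | H.IsSymm} :=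
  fun _ h₁ _ h₂ a b _ _ _ => (h₁.smul a).add (h₂.smul b)

theorem convex_setOf_posDef : Convex ℝ {A : Matrix n n ℝ | A.PosDef} := by
  intro A hA B hB a b ha hb hab
  rcases ha.eq_or_lt with rfl | ha
  · simpa [show b = 1 by linarith] using hB
  · exact (hA.smul ha).add_posSemidef (hB.posSemidef.smul hb)

theorem convex_setOf_posDef_sub (T : Matrix n n ℝ) :
    Convex ℝ {H : Matrix n n ℝ | (T - H).PosDef} := by
  intro H₁ h₁ H₂ h₂ a b ha hb hab
  simpa only [Set.mem_ofPred_eq, sub_combo_eq_combo_sub T H₁ H₂ hab]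
    using convex_setOf_posDef h₁ h₂ ha hb hab

theorem PosSemidef.trace_mul_nonneg [Fintype n] [DecidableEq n] {Z M : Matrix n n ℝ}
    (hZ : Z.PosSemidef) (hM : M.PosSemidef) : 0 ≤ (Z * M).trace := by
  obtain ⟨B, rfl⟩ : ∃ B : Matrix n n ℝ, M = Bᴴ * B := by
    open MatrixOrder in
    exact ⟨CFC.sqrt M, by
      rw [(CFC.sqrt_nonneg M).posSemidef.1.eq, CFC.sqrt_mul_sqrt_self M hM.nonneg]⟩
  rw [← Matrix.mul_assoc, trace_mul_cycle]
  exact (hZ.mul_mul_conjTranspose_same B).trace_nonneg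

theorem PosSemidef.trace_mul_le_trace_mul [Fintype n] [DecidableEq n]
    {Z M N : Matrix n n ℝ} (hZ : Z.PosSemidef) (hMN : (N - M).PosSemidef) :
    (Z * M).trace ≤ (Z * N).trace := by
  have := hZ.trace_mul_nonneg hMN
  rw [Matrix.mul_sub, trace_sub] at this
  linarith

theorem PosDef.posSemidef_fromBlocks_transpose_inv [Finite m] [Fintype n] [DecidableEq n]
    {A : Matrix n n ℝ} (hA : A.PosDef) (X : Matrix n m ℝ) :
    (fromBlocks A X Xᵀ (Xᵀ * A⁻¹ * X)).PosSemidef := by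
  have := hA.isUnit.invertible
  rw [← conjTranspose_eq_transpose_of_trivial, hA.fromBlocks₁₁, sub_self]
  exact .zero

theorem posSemidef_combo_sub_transpose_mul_inv_mul [Finite m] [Fintype n] [DecidableEq n]
    {A B : Matrix n n ℝ} (hA : A.PosDef) (hB : B.PosDef) (X Y : Matrix n m ℝ) {a b : ℝ}
    (ha : 0 ≤ a) (hb : 0 ≤ b) (hab : a + b = 1) :
    (a • (Xᵀ * A⁻¹ * X) + b • (Yᵀ * B⁻¹ * Y) -
      (a • X + b • Y)ᵀ * (a • A + b • B)⁻¹ * (a • X + b • Y)).PosSemidef := by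
  have hC : (a • A + b • B).PosDef := convex_setOf_posDef hA hB ha hb hab
  have := hC.isUnit.invertible
  have hblocks := ((hA.posSemidef_fromBlocks_transpose_inv X).smul ha).add
    ((hB.posSemidef_fromBlocks_transpose_inv Y).smul hb)
  rwa [fromBlocks_smul, fromBlocks_smul, fromBlocks_add, ← transpose_smul, ← transpose_smul,
    ← transpose_add, ← conjTranspose_eq_transpose_of_trivial, hC.fromBlocks₁₁,
    conjTranspose_eq_transpose_of_trivial] at hblocks

theorem convexOn_trace_mul_transpose_mul_inv_mul [Fintype m] [DecidableEq m] [Fintype n]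
    [DecidableEq n] {Z : Matrix m m ℝ} (hZ : Z.PosSemidef) :
    ConvexOn ℝ {p : Matrix n m ℝ × Matrix n n ℝ | p.2.PosDef}
      (fun p => (Z * (p.1ᵀ * p.2⁻¹ * p.1)).trace) := by
  refine ⟨convex_setOf_posDef.linear_preimage (LinearMap.snd ℝ _ _), ?_⟩
  rintro ⟨X, A⟩ hA ⟨Y, B⟩ hB a b ha hb hab
  have := hZ.trace_mul_le_trace_mul
    (posSemidef_combo_sub_transpose_mul_inv_mul hA hB X Y ha hb hab)
  simpa only [Prod.smul_mk, Prod.mk_add_mk, Matrix.mul_add, mul_smul_comm, trace_add, trace_smul]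
    using this

end Matrix

theorem liftSym_add {d : ℕ} (H₁ H₂ : Matrix (Fin d) (Fin d) ℝ) (h₁ h₂ : Fin d → ℝ) :
    liftSym (H₁ + H₂) (h₁ + h₂) = liftSym H₁ h₁ + liftSym H₂ h₂ := by
  ext i j
  simp only [liftSym, Matrix.add_apply, Pi.add_apply]
  split_ifs <;> simp

theorem liftSym_smul {d : ℕ} (c : ℝ) (H : Matrix (Fin d) (Fin d) ℝ) (h : Fin d → ℝ) :
    liftSym (c • H) (c • h) = c • liftSym H h := by
  ext i j
  simp only [liftSym, Matrix.smul_apply, Pi.smul_apply]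
  split_ifs <;> simp

theorem liftRect_add {d : ℕ} (H₁ H₂ : Matrix (Fin d) (Fin d) ℝ) (h₁ h₂ : Fin d → ℝ) :
    liftRect (H₁ + H₂) (h₁ + h₂) = liftRect H₁ h₁ + liftRect H₂ h₂ := by
  ext i j
  simp only [liftRect, Matrix.add_apply, Pi.add_apply]
  split_ifs <;> rfl

theorem liftRect_smul {d : ℕ} (c : ℝ) (H : Matrix (Fin d) (Fin d) ℝ) (h : Fin d → ℝ) :
    liftRect (c • H) (c • h) = c • liftRect H h := by
  ext i j
  simp only [liftRect, Matrix.smul_apply, Pi.smul_apply]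
  split_ifs <;> rfl

theorem statement2_general {d : ℕ} (Θstar : Matrix (Fin d) (Fin d) ℝ)
    (Z : Matrix (Fin (d+1)) (Fin (d+1)) ℝ) (hZ : Z.PosSemidef) :
    ConvexOn ℝ
      {p : (Fin d → ℝ) × Matrix (Fin d) (Fin d) ℝ | p.2.IsSymm ∧ (Θstar⁻¹ - p.2).PosDef}
      (fun p => Gammaf Θstar p.1 p.2 Z) := by
  refine ⟨(convex_setOf_isSymm.inter (convex_setOf_posDef_sub Θstar⁻¹)).linear_preimage
    (LinearMap.snd ℝ _ _), ?_⟩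
  rintro ⟨h₁, H₁⟩ ⟨-, hH₁⟩ ⟨h₂, H₂⟩ ⟨-, hH₂⟩ a b ha hb hab
  have hfrac := (convexOn_trace_mul_transpose_mul_inv_mul hZ).2
    (x := (liftRect H₁ h₁, Θstar⁻¹ - H₁)) hH₁ (y := (liftRect H₂ h₂, Θstar⁻¹ - H₂)) hH₂
    ha hb hab
  simp only [Prod.smul_mk, Prod.mk_add_mk, ← sub_combo_eq_combo_sub _ _ _ hab,
    smul_eq_mul] at hfrac
  simp only [Gammaf, Prod.smul_mk, Prod.mk_add_mk, liftSym_add, liftSym_smul, liftRect_add,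
    liftRect_smul, Matrix.mul_add Z, mul_smul_comm, trace_add, trace_smul, smul_eq_mul]
  linarith

/-- for fixed positive definite `Θ*` and positive semidefinite
`Z ∈ S^{d+1}`, the function `(h,H) ↦ Γ(h,H;Z)` is convex on the convex set
`{(h,H) : h ∈ ℝ^d, H ∈ S^d, H ≺ Θ*⁻¹}`. -/
theorem statement2 {d : ℕ} (Θstar : Matrix (Fin d) (Fin d) ℝ) (hstarSym : Θstar.IsSymm)
    (hstar : Θstar.PosDef)
    (Z : Matrix (Fin (d+1)) (Fin (d+1)) ℝ) (hZ : Z.PosSemidef) :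
    ConvexOn ℝ
      {p : (Fin d → ℝ) × Matrix (Fin d) (Fin d) ℝ | p.2.IsSymm ∧ (Θstar⁻¹ - p.2).PosDef}
      (fun p => Gammaf Θstar p.1 p.2 Z) :=
  statement2_general Θstar Z hZ

end
end

section
/- Let R₀, R₁ ∈ S^d and let d̄∈[0,1) satisfy ‖R₀‖ ≤ d̄ and ‖R₁‖ ≤ d̄. Then −ln det(I−R₁) ≤ −ln det(I−R₀) + Tr(R₁−R₀) + (D/(1−d̄))·‖R₁−R₀‖_F, where D = max(‖R₀‖_F, ‖R₁‖_F). -/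
open Matrix Real

noncomputable section

/-
The map `R ↦ -log det (1 - R)` is convex on symmetric matrices of spectral norm `< 1`, with
gradient `(1 - R)⁻¹`, and the claim is its tangent-plane inequality at `R₁` plus an estimate of
the gradient term. For `A = 1 - R₀`, `B = 1 - R₁` the tangent-plane inequality is
`log det A - log det B ≤ tr (B⁻¹ A) - d`, which is `log det M ≤ tr M - d` (i.e. `log λ ≤ λ - 1`
on eigenvalues) for `M = B^{-1/2} A B^{-1/2}`. Since `B⁻¹ = 1 + C` with `C = B⁻¹ R₁`, the gradient
term is `tr (R₁ - R₀) + tr (C (R₁ - R₀))`, and Cauchy–Schwarz bounds the last trace by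
`‖C‖_F ‖R₁ - R₀‖_F`. Finally `C = R₁ + R₁ C`, so `‖C‖_F ≤ ‖R₁‖_F + ‖R₁‖ ‖C‖_F`, i.e.
`‖C‖_F ≤ ‖R₁‖_F / (1 - d̄)`.
-/

namespace Matrix.PosDef

open scoped MatrixOrder

variable {n : Type*} [Fintype n] [DecidableEq n]

theorem log_det_le_trace_sub_card {M : Matrix n n ℝ} (hM : M.PosDef) :
    Real.log M.det ≤ M.trace - Fintype.card n := by
  have hpos := hM.eigenvalues_pos
  rw [hM.isHermitian.det_eq_prod_eigenvalues, hM.isHermitian.trace_eq_sum_eigenvalues]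
  simp only [RCLike.ofReal_real_eq_id, id_eq]
  rw [Real.log_prod fun i _ => (hpos i).ne']
  calc ∑ i, Real.log (hM.isHermitian.eigenvalues i)
      ≤ ∑ i, (hM.isHermitian.eigenvalues i - 1) :=
        Finset.sum_le_sum fun i _ => Real.log_le_sub_one_of_pos (hpos i)
    _ = _ := by simp [Finset.sum_sub_distrib]

theorem log_det_sub_log_det_le_trace {A B : Matrix n n ℝ} (hA : A.PosDef) (hB : B.PosDef) :
    Real.log A.det - Real.log B.det ≤ (B⁻¹ * A).trace - Fintype.card n := by
  set S := CFC.sqrt B⁻¹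
  have hBinv : 0 ≤ B⁻¹ := hB.inv.posSemidef.nonneg
  have hSS : S * S = B⁻¹ := CFC.sqrt_mul_sqrt_self _ hBinv
  have hSstar : star S = S := (CFC.sqrt_nonneg B⁻¹).isSelfAdjoint
  have hSunit : IsUnit S := (CFC.isUnit_sqrt_iff _ hBinv).2 hB.inv.isUnit
  have hM : (star S * A * S).PosDef := (IsUnit.posDef_star_left_conjugate_iff hSunit).2 hA
  have hdet : (star S * A * S).det = A.det * B.det⁻¹ := by
    rw [det_mul, det_mul, hSstar, mul_comm, ← mul_assoc, ← det_mul, hSS, det_nonsing_inv,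
      Ring.inverse_eq_inv', mul_comm]
  have htrace : (star S * A * S).trace = (B⁻¹ * A).trace := by
    rw [trace_mul_cycle, hSstar, hSS]
  have := hM.log_det_le_trace_sub_card
  rwa [hdet, htrace, Real.log_mul hA.det_pos.ne' (inv_ne_zero hB.det_pos.ne'), Real.log_inv,
    ← sub_eq_add_neg] at this

end Matrix.PosDef

section FrobeniusAndSpectralNorms

variable {d : ℕ}

theorem frobNorm_eq_sqrt_sum_norm_col_sq (Y : Matrix (Fin d) (Fin d) ℝ) :
    frobNorm Y = √(∑ j, ‖WithLp.toLp 2 (Yᵀ j)‖ ^ 2) := by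
  simp only [frobNorm, EuclideanSpace.norm_sq_eq, Real.norm_eq_abs, sq_abs, transpose_apply]
  rw [Finset.sum_comm]

theorem frobNorm_mul_le (X Y : Matrix (Fin d) (Fin d) ℝ) :
    frobNorm (X * Y) ≤ specNorm X * frobNorm Y := by
  have hcol (j : Fin d) : ‖WithLp.toLp 2 ((X * Y)ᵀ j)‖ ≤ specNorm X * ‖WithLp.toLp 2 (Yᵀ j)‖ := by
    have hXY : (X * Y)ᵀ j = X *ᵥ Yᵀ j := by
      ext i; simp [mul_apply, mulVec, dotProduct]
    rw [hXY, ← toEuclideanCLM_toLp]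
    exact (toEuclideanCLM (𝕜 := ℝ) X).le_opNorm _
  have hX : specNorm X = √(specNorm X ^ 2) := (Real.sqrt_sq (norm_nonneg _)).symm
  rw [frobNorm_eq_sqrt_sum_norm_col_sq, frobNorm_eq_sqrt_sum_norm_col_sq, hX,
    ← Real.sqrt_mul (sq_nonneg _), Finset.mul_sum]
  gcongr with j
  rw [← mul_pow]
  gcongr
  exact hcol j

section

attribute [local instance] Matrix.frobeniusNormedAddCommGroup

theorem frobNorm_eq_norm (A : Matrix (Fin d) (Fin d) ℝ) : frobNorm A = ‖A‖ := by
  simp [frobNorm, frobenius_norm_def, Real.sqrt_eq_rpow]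

theorem frobNorm_add_le (X Y : Matrix (Fin d) (Fin d) ℝ) :
    frobNorm (X + Y) ≤ frobNorm X + frobNorm Y := by
  simpa only [frobNorm_eq_norm] using norm_add_le X Y

end

theorem trace_mul_le_frobNorm_mul_frobNorm (X Y : Matrix (Fin d) (Fin d) ℝ) :
    (X * Y).trace ≤ frobNorm X * frobNorm Y := by
  have h := Real.sum_mul_le_sqrt_mul_sqrt Finset.univ
    (fun p : Fin d × Fin d => X p.1 p.2) (fun p => Y p.2 p.1)
  simp only [Fintype.sum_prod_type] at h
  rw [Finset.sum_comm (f := fun i j => Y j i ^ 2)] at h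
  simpa [trace, mul_apply, frobNorm] using h

theorem posDef_one_sub_of_specNorm_lt_one {R : Matrix (Fin d) (Fin d) ℝ} (hR : R.IsHermitian)
    (h : specNorm R < 1) : (1 - R).PosDef := by
  refine .of_dotProduct_mulVec_pos (isHermitian_one.sub hR) fun x hx => ?_
  have hx' : 0 < ‖WithLp.toLp 2 x‖ := norm_pos_iff.2 (by simpa using hx)
  have hRx : x ⬝ᵥ R *ᵥ x ≤ specNorm R * ‖WithLp.toLp 2 x‖ ^ 2 := by
    calc x ⬝ᵥ R *ᵥ x
        = inner ℝ (WithLp.toLp 2 x) (toEuclideanCLM (𝕜 := ℝ) R (WithLp.toLp 2 x)) :=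
          (inner_toEuclideanCLM R _ _).symm
      _ ≤ ‖WithLp.toLp 2 x‖ * ‖toEuclideanCLM (𝕜 := ℝ) R (WithLp.toLp 2 x)‖ :=
          real_inner_le_norm _ _
      _ ≤ ‖WithLp.toLp 2 x‖ * (specNorm R * ‖WithLp.toLp 2 x‖) := by
          gcongr; exact ContinuousLinearMap.le_opNorm _ _
      _ = specNorm R * ‖WithLp.toLp 2 x‖ ^ 2 := by ring
  have hxx : x ⬝ᵥ x = ‖WithLp.toLp 2 x‖ ^ 2 := by
    rw [EuclideanSpace.norm_sq_eq]; simp [dotProduct, sq]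
  rw [star_trivial, sub_mulVec, one_mulVec, dotProduct_sub, hxx]
  nlinarith [mul_pos (sub_pos.2 h) (pow_pos hx' 2)]

theorem frobNorm_inv_one_sub_mul_le {R : Matrix (Fin d) (Fin d) ℝ} (hR : specNorm R < 1)
    (hdet : IsUnit (1 - R).det) :
    frobNorm ((1 - R)⁻¹ * R) ≤ frobNorm R / (1 - specNorm R) := by
  have hC : (1 - R)⁻¹ * R = R + R * ((1 - R)⁻¹ * R) := by
    have h : (1 - R) * ((1 - R)⁻¹ * R) = R := by
      rw [← Matrix.mul_assoc, mul_nonsing_inv _ hdet, Matrix.one_mul]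
    calc (1 - R)⁻¹ * R = (1 - R) * ((1 - R)⁻¹ * R) + R * ((1 - R)⁻¹ * R) := by
          rw [Matrix.sub_mul, Matrix.one_mul, sub_add_cancel]
      _ = R + R * ((1 - R)⁻¹ * R) := by rw [h]
  have h : frobNorm ((1 - R)⁻¹ * R) ≤ frobNorm R + specNorm R * frobNorm ((1 - R)⁻¹ * R) :=
    calc frobNorm ((1 - R)⁻¹ * R) = frobNorm (R + R * ((1 - R)⁻¹ * R)) := congrArg frobNorm hC
      _ ≤ frobNorm R + frobNorm (R * ((1 - R)⁻¹ * R)) := frobNorm_add_le _ _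
      _ ≤ _ := by gcongr; exact frobNorm_mul_le _ _
  rw [le_div_iff₀ (by linarith)]
  linarith

end FrobeniusAndSpectralNorms

theorem inv_one_sub_mul_one_sub {n : Type*} [Fintype n] [DecidableEq n] {R₀ R₁ : Matrix n n ℝ}
    (hdet : IsUnit (1 - R₁).det) :
    (1 - R₁)⁻¹ * (1 - R₀) = 1 + (R₁ - R₀) + (1 - R₁)⁻¹ * R₁ * (R₁ - R₀) := by
  calc (1 - R₁)⁻¹ * (1 - R₀)
      = (1 - R₁)⁻¹ * (1 - R₁) * (1 + (R₁ - R₀)) + (1 - R₁)⁻¹ * R₁ * (R₁ - R₀) := by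
        noncomm_ring
    _ = 1 + (R₁ - R₀) + (1 - R₁)⁻¹ * R₁ * (R₁ - R₀) := by
        rw [nonsing_inv_mul _ hdet, Matrix.one_mul]

theorem statement6_general {d : ℕ} (R₀ R₁ : Matrix (Fin d) (Fin d) ℝ)
    (hR₀sym : R₀.IsSymm) (hR₁sym : R₁.IsSymm)
    (dbar : ℝ) (hd1 : dbar < 1)
    (hR₀ : specNorm R₀ ≤ dbar) (hR₁ : specNorm R₁ ≤ dbar) :
    -Real.log ((1 - R₁).det) ≤
      -Real.log ((1 - R₀).det) + (R₁ - R₀).trace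
        + (max (frobNorm R₀) (frobNorm R₁) / (1 - dbar)) * frobNorm (R₁ - R₀) := by
  have hA := posDef_one_sub_of_specNorm_lt_one (isHermitian_iff_isSymm.2 hR₀sym) (by linarith)
  have hB := posDef_one_sub_of_specNorm_lt_one (isHermitian_iff_isSymm.2 hR₁sym) (by linarith)
  have hdet : IsUnit (1 - R₁).det := hB.det_pos.ne'.isUnit
  have hgibbs := hA.log_det_sub_log_det_le_trace hB
  rw [inv_one_sub_mul_one_sub hdet, trace_add, trace_add, trace_one, Fintype.card_fin] at hgibbs
  have hC : frobNorm ((1 - R₁)⁻¹ * R₁) ≤ max (frobNorm R₀) (frobNorm R₁) / (1 - dbar) :=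
    calc frobNorm ((1 - R₁)⁻¹ * R₁) ≤ frobNorm R₁ / (1 - specNorm R₁) :=
          frobNorm_inv_one_sub_mul_le (by linarith) hdet
      _ ≤ max (frobNorm R₀) (frobNorm R₁) / (1 - dbar) := by
          gcongr
          · exact le_max_of_le_right (Real.sqrt_nonneg _)
          · exact le_max_right _ _
  have hCS := trace_mul_le_frobNorm_mul_frobNorm ((1 - R₁)⁻¹ * R₁) (R₁ - R₀)
  have hΔ : 0 ≤ frobNorm (R₁ - R₀) := Real.sqrt_nonneg _
  linarith [mul_le_mul_of_nonneg_right hC hΔ]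

/-- for symmetric `R₀, R₁` with spectral norms `≤ d̄ < 1`,
`−ln det(I−R₁) ≤ −ln det(I−R₀) + Tr(R₁−R₀) + (D/(1−d̄))·‖R₁−R₀‖_F`,
where `D = max(‖R₀‖_F, ‖R₁‖_F)`. -/
theorem statement6 {d : ℕ} (R₀ R₁ : Matrix (Fin d) (Fin d) ℝ)
    (hR₀sym : R₀.IsSymm) (hR₁sym : R₁.IsSymm)
    (dbar : ℝ) (hd0 : 0 ≤ dbar) (hd1 : dbar < 1)
    (hR₀ : specNorm R₀ ≤ dbar) (hR₁ : specNorm R₁ ≤ dbar) :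
    -Real.log ((1 - R₁).det) ≤
      -Real.log ((1 - R₀).det) + (R₁ - R₀).trace
        + (max (frobNorm R₀) (frobNorm R₁) / (1 - dbar)) * frobNorm (R₁ - R₀) :=
  statement6_general R₀ R₁ hR₀sym hR₁sym dbar hd1 hR₀ hR₁

end
end

section
/- Let ε∈(0,1) and let f̄∈ℝ^{n_F}, ᾱ>0, β̄>0, κ̄∈ℝ, ρ̃∈ℝ satisfy: f̄/ᾱ∈F and ᾱ·ln(ε/2) ≥ Ψ₊(f̄,ᾱ) − ρ̃ + κ̄; and f̄/β̄∈F and β̄·ln(ε/2) ≥ Ψ₋(f̄,β̄) − ρ̃ − κ̄. Then for every x∈X and every Borel probability measure P on ℝ^{n_F} associated with x, Prob_{ω∼P}{ |⟨f̄,ω⟩ + κ̄ − G(x)| > ρ̃ } ≤ ε. -/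
/-!
Chernoff bounds on each side. If `P` is associated with `x`, Markov's inequality applied to
`exp ⟨f̄/ᾱ, ω⟩` gives `P{⟨f̄,ω⟩ + κ̄ − G(x) > ρ̃} ≤ exp(Φ(f̄/ᾱ; A x) − (ρ̃ − κ̄ + G(x))/ᾱ)`, and since
`ᾱ Φ(f̄/ᾱ; A x) − G(x) ≤ Ψ₊(f̄,ᾱ)` (a supremum of a continuous function over the compact `𝒳`), the
first constraint makes the right-hand side at most `ε/2`. The lower tail is the same argument
with `−f̄`, `β̄` and `Ψ₋`.
-/

open Matrix MeasureTheory Real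

noncomputable section

/-- `Ψ₊(f,α) = sup_{x∈𝒳} [α·Φ(f/α; A(x)) − G(x)]`, where `G(x) = ⟨g,x⟩ + c`. -/
def PsiPlus {nF nM nX : ℕ} (Φ : (Fin nF → ℝ) → (Fin nM → ℝ) → ℝ)
    (A : (Fin nX → ℝ) →ᵃ[ℝ] (Fin nM → ℝ)) (g : Fin nX → ℝ) (c : ℝ)
    (𝒳 : Set (Fin nX → ℝ)) (f : Fin nF → ℝ) (α : ℝ) : ℝ :=
  sSup ((fun x => α * Φ (α⁻¹ • f) (A x) - (g ⬝ᵥ x + c)) '' 𝒳)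

/-- `Ψ₋(f,β) = sup_{x∈𝒳} [β·Φ(−f/β; A(x)) + G(x)]`. -/
def PsiMinus {nF nM nX : ℕ} (Φ : (Fin nF → ℝ) → (Fin nM → ℝ) → ℝ)
    (A : (Fin nX → ℝ) →ᵃ[ℝ] (Fin nM → ℝ)) (g : Fin nX → ℝ) (c : ℝ)
    (𝒳 : Set (Fin nX → ℝ)) (f : Fin nF → ℝ) (β : ℝ) : ℝ :=
  sSup ((fun x => β * Φ (-(β⁻¹ • f)) (A x) + (g ⬝ᵥ x + c)) '' 𝒳)

/-- A Borel probability measure `P` is associated with parameter `μ` if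
`∫ e^{⟨f,ω⟩} P(dω) ≤ e^{Φ(f;μ)}` for all `f ∈ F`
(i.e. `ln ∫ e^{⟨f,ω⟩} P(dω) ≤ Φ(f;μ)`). -/
def AssocWith {nF nM : ℕ} (Φ : (Fin nF → ℝ) → (Fin nM → ℝ) → ℝ)
    (F : Set (Fin nF → ℝ)) (μ : Fin nM → ℝ) (P : Measure (Fin nF → ℝ)) : Prop :=
  ∀ f ∈ F, ∫⁻ ω, ENNReal.ofReal (Real.exp (f ⬝ᵥ ω)) ∂P
    ≤ ENNReal.ofReal (Real.exp (Φ f μ))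

lemma measure_lt_le_exp_sub_of_lintegral_exp_le {Ω : Type*} [MeasurableSpace Ω]
    {μ : Measure Ω} {Y : Ω → ℝ} (hY : AEMeasurable Y μ) {C : ℝ}
    (hmgf : ∫⁻ ω, ENNReal.ofReal (exp (Y ω)) ∂μ ≤ ENNReal.ofReal (exp C)) (a : ℝ) :
    μ {ω | a < Y ω} ≤ ENNReal.ofReal (exp (C - a)) := by
  have hexp_meas : AEMeasurable (fun ω => ENNReal.ofReal (exp (Y ω))) μ :=
    ENNReal.measurable_ofReal.comp_aemeasurable (measurable_exp.comp_aemeasurable hY)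
  have hexp_a : ENNReal.ofReal (exp a) ≠ 0 := by simp [exp_pos]
  calc μ {ω | a < Y ω}
      ≤ μ {ω | ENNReal.ofReal (exp a) ≤ ENNReal.ofReal (exp (Y ω))} :=
        measure_mono fun ω hω => ENNReal.ofReal_le_ofReal (exp_le_exp.mpr (le_of_lt hω))
    _ ≤ (∫⁻ ω, ENNReal.ofReal (exp (Y ω)) ∂μ) / ENNReal.ofReal (exp a) :=
        meas_ge_le_lintegral_div hexp_meas hexp_a ENNReal.ofReal_ne_top
    _ ≤ ENNReal.ofReal (exp C) / ENNReal.ofReal (exp a) := ENNReal.div_le_div_right hmgf _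
    _ = ENNReal.ofReal (exp (C - a)) := by
        rw [exp_sub, ENNReal.ofReal_div_of_pos (exp_pos a)]

lemma measure_lt_dotProduct_add_le {n : ℕ} {P : Measure (Fin n → ℝ)} {f : Fin n → ℝ}
    {α C s ρ δ : ℝ} (hα : 0 < α) (hδ : 0 < δ)
    (hmgf : ∫⁻ ω, ENNReal.ofReal (exp ((α⁻¹ • f) ⬝ᵥ ω)) ∂P ≤ ENNReal.ofReal (exp C))
    (hbound : α * C + s - ρ ≤ α * log δ) :
    P {ω | ρ < f ⬝ᵥ ω + s} ≤ ENNReal.ofReal δ := by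
  have hY : Continuous fun ω : Fin n → ℝ => (α⁻¹ • f) ⬝ᵥ ω := by fun_prop
  have hevent : {ω | ρ < f ⬝ᵥ ω + s} = {ω | (ρ - s) / α < (α⁻¹ • f) ⬝ᵥ ω} := by
    ext ω
    simp only [Set.mem_ofPred_eq, smul_dotProduct, smul_eq_mul, inv_mul_eq_div,
      div_lt_div_iff_of_pos_right hα]
    constructor <;> intro h <;> linarith
  have hexponent : C - (ρ - s) / α ≤ log δ := by
    rw [← mul_le_mul_iff_right₀ hα, mul_sub, mul_div_cancel₀ _ hα.ne']
    linarith
  rw [hevent]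
  calc _ ≤ ENNReal.ofReal (exp (C - (ρ - s) / α)) :=
        measure_lt_le_exp_sub_of_lintegral_exp_le hY.measurable.aemeasurable hmgf _
    _ ≤ ENNReal.ofReal δ :=
        ENNReal.ofReal_le_ofReal ((exp_le_exp.mpr hexponent).trans (exp_log hδ).le)

lemma measure_lt_abs_le {Ω : Type*} [MeasurableSpace Ω] (μ : Measure Ω) (Z : Ω → ℝ) (ρ : ℝ) :
    μ {ω | ρ < |Z ω|} ≤ μ {ω | ρ < Z ω} + μ {ω | ρ < -Z ω} := by
  simp only [lt_abs, Set.ofPred_or]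
  exact measure_union_le _ _

section Psi

variable {nF nM nX : ℕ} {F : Set (Fin nF → ℝ)} {M : Set (Fin nM → ℝ)}
  {Φ : (Fin nF → ℝ) → (Fin nM → ℝ) → ℝ} {𝒳 : Set (Fin nX → ℝ)}
  {A : (Fin nX → ℝ) →ᵃ[ℝ] (Fin nM → ℝ)}

lemma continuousOn_comp_affine
    (hΦ : ContinuousOn (fun p : (Fin nF → ℝ) × (Fin nM → ℝ) => Φ p.1 p.2) (F ×ˢ M))
    (hA : ∀ x ∈ 𝒳, A x ∈ M) {f : Fin nF → ℝ} (hf : f ∈ F) :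
    ContinuousOn (fun x => Φ f (A x)) 𝒳 :=
  hΦ.comp (continuous_const.prodMk A.continuous_of_finiteDimensional).continuousOn
    fun x hx => ⟨hf, hA x hx⟩

variable (hΦ : ContinuousOn (fun p : (Fin nF → ℝ) × (Fin nM → ℝ) => Φ p.1 p.2) (F ×ˢ M))
  (h𝒳 : IsCompact 𝒳) (hA : ∀ x ∈ 𝒳, A x ∈ M) (g : Fin nX → ℝ) (c : ℝ)
  {f : Fin nF → ℝ} {x : Fin nX → ℝ} (hx : x ∈ 𝒳)
include hΦ h𝒳 hA hx

lemma le_PsiPlus {α : ℝ} (hf : α⁻¹ • f ∈ F) :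
    α * Φ (α⁻¹ • f) (A x) - (g ⬝ᵥ x + c) ≤ PsiPlus Φ A g c 𝒳 f α :=
  le_csSup (h𝒳.bddAbove_image ((continuousOn_const.mul (continuousOn_comp_affine hΦ hA hf)).sub
    (by fun_prop))) (Set.mem_image_of_mem _ hx)

lemma le_PsiMinus {β : ℝ} (hf : β⁻¹ • -f ∈ F) :
    β * Φ (β⁻¹ • -f) (A x) + (g ⬝ᵥ x + c) ≤ PsiMinus Φ A g c 𝒳 f β := by
  rw [smul_neg] at hf ⊢
  exact le_csSup (h𝒳.bddAbove_image ((continuousOn_const.mul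
    (continuousOn_comp_affine hΦ hA hf)).add (by fun_prop)))
    (Set.mem_image_of_mem _ hx)

end Psi

theorem statement11_general {nF nM nX : ℕ}
    (F : Set (Fin nF → ℝ))
    (hFsymm : ∀ f ∈ F, -f ∈ F)
    (M : Set (Fin nM → ℝ))
    (Φ : (Fin nF → ℝ) → (Fin nM → ℝ) → ℝ)
    (hΦcont : ContinuousOn (fun p : (Fin nF → ℝ) × (Fin nM → ℝ) => Φ p.1 p.2) (F ×ˢ M))
    (𝒳 : Set (Fin nX → ℝ))
    (h𝒳cpt : IsCompact 𝒳)
    (X : Set (Fin nX → ℝ)) (hX𝒳 : X ⊆ 𝒳)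
    (A : (Fin nX → ℝ) →ᵃ[ℝ] (Fin nM → ℝ)) (hA : ∀ x ∈ 𝒳, A x ∈ M)
    (g : Fin nX → ℝ) (c : ℝ) (ε : ℝ) (hε0 : 0 < ε)
    (fbar : Fin nF → ℝ) (αbar βbar κbar ρ : ℝ)
    (hα : 0 < αbar) (hαF : αbar⁻¹ • fbar ∈ F)
    (hβ : 0 < βbar) (hβF : βbar⁻¹ • fbar ∈ F)
    (hplus : PsiPlus Φ A g c 𝒳 fbar αbar - ρ + κbar ≤ αbar * Real.log (ε/2))
    (hminus : PsiMinus Φ A g c 𝒳 fbar βbar - ρ - κbar ≤ βbar * Real.log (ε/2))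
    (x : Fin nX → ℝ) (hx : x ∈ X)
    (P : Measure (Fin nF → ℝ))
    (hassoc : AssocWith Φ F (A x) P) :
    P {ω | ρ < |fbar ⬝ᵥ ω + κbar - (g ⬝ᵥ x + c)|} ≤ ENNReal.ofReal ε := by
  have hx𝒳 : x ∈ 𝒳 := hX𝒳 hx
  have hε2 : 0 < ε / 2 := half_pos hε0
  have hβF' : βbar⁻¹ • -fbar ∈ F := smul_neg βbar⁻¹ fbar ▸ hFsymm _ hβF
  have hupper := le_PsiPlus hΦcont h𝒳cpt hA g c hx𝒳 hαF
  have hlower := le_PsiMinus hΦcont h𝒳cpt hA g c hx𝒳 hβF'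
  calc P {ω | ρ < |fbar ⬝ᵥ ω + κbar - (g ⬝ᵥ x + c)|}
      ≤ P {ω | ρ < fbar ⬝ᵥ ω + (κbar - (g ⬝ᵥ x + c))}
        + P {ω | ρ < -fbar ⬝ᵥ ω + ((g ⬝ᵥ x + c) - κbar)} := by
        convert measure_lt_abs_le P (fun ω => fbar ⬝ᵥ ω + κbar - (g ⬝ᵥ x + c)) ρ using 3 <;>
          ext ω <;> simp only [Set.mem_ofPred_eq, neg_dotProduct] <;> constructor <;>
          intro h <;> linarith
    _ ≤ ENNReal.ofReal (ε / 2) + ENNReal.ofReal (ε / 2) := by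
        gcongr
        · exact measure_lt_dotProduct_add_le hα hε2 (hassoc _ hαF) (by linarith)
        · exact measure_lt_dotProduct_add_le hβ hε2 (hassoc _ hβF') (by linarith)
    _ = ENNReal.ofReal ε := by rw [← ENNReal.ofReal_add hε2.le hε2.le, add_halves]

/-- risk bound for the affine estimate built from a feasible solution
of the system (43). -/
theorem statement11 {nF nM nX : ℕ}
    (F : Set (Fin nF → ℝ)) (hFcl : IsClosed F) (hFconv : Convex ℝ F)
    (hFsymm : ∀ f ∈ F, -f ∈ F) (hF0 : 0 ∈ interior F)
    (M : Set (Fin nM → ℝ)) (hMcl : IsClosed M) (hMconv : Convex ℝ M)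
    (Φ : (Fin nF → ℝ) → (Fin nM → ℝ) → ℝ)
    (hΦcont : ContinuousOn (fun p : (Fin nF → ℝ) × (Fin nM → ℝ) => Φ p.1 p.2) (F ×ˢ M))
    (hΦconv : ∀ μ ∈ M, ConvexOn ℝ F (fun f => Φ f μ))
    (hΦconc : ∀ f ∈ F, ConcaveOn ℝ M (fun μ => Φ f μ))
    (𝒳 : Set (Fin nX → ℝ)) (h𝒳ne : 𝒳.Nonempty) (h𝒳conv : Convex ℝ 𝒳)
    (h𝒳cpt : IsCompact 𝒳)
    (X : Set (Fin nX → ℝ)) (hXne : X.Nonempty) (hX𝒳 : X ⊆ 𝒳)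
    (A : (Fin nX → ℝ) →ᵃ[ℝ] (Fin nM → ℝ)) (hA : ∀ x ∈ 𝒳, A x ∈ M)
    (g : Fin nX → ℝ) (c : ℝ) (ε : ℝ) (hε0 : 0 < ε) (hε1 : ε < 1)
    (fbar : Fin nF → ℝ) (αbar βbar κbar ρ : ℝ)
    (hα : 0 < αbar) (hαF : αbar⁻¹ • fbar ∈ F)
    (hβ : 0 < βbar) (hβF : βbar⁻¹ • fbar ∈ F)
    (hplus : PsiPlus Φ A g c 𝒳 fbar αbar - ρ + κbar ≤ αbar * Real.log (ε/2))
    (hminus : PsiMinus Φ A g c 𝒳 fbar βbar - ρ - κbar ≤ βbar * Real.log (ε/2))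
    (x : Fin nX → ℝ) (hx : x ∈ X)
    (P : Measure (Fin nF → ℝ)) [IsProbabilityMeasure P]
    (hassoc : AssocWith Φ F (A x) P) :
    P {ω | ρ < |fbar ⬝ᵥ ω + κbar - (g ⬝ᵥ x + c)|} ≤ ENNReal.ofReal ε :=
  statement11_general F hFsymm M Φ hΦcont 𝒳 h𝒳cpt X hX𝒳 A hA g c ε hε0 fbar αbar βbar κbar ρ hα hαF
    hβ hβF hplus hminus x hx P hassoc

end
end

section
/- Assume in addition that Φ(0;μ) ≥ 0 for every μ∈M, and let ε∈(0,1). Then for every f∈ℝ^{n_F}: (a) the quantity Ψ̂₊(f) := inf{ Ψ₊(f,α) + α·ln(2/ε) : α>0, f/α∈F } is finite and equals max_{x∈𝒳} inf{ α·Φ(f/α; A(x)) − G(x) + α·ln(2/ε) : α>0, f/α∈F }; and (b) the function f ↦ Ψ̂₊(f) is convex on ℝ^{n_F}. -/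
/-!
For fixed `x`, the map `(α, f) ↦ α Φ(f/α; A x)` is the perspective of the convex function
`Φ(·; A x)`, hence jointly convex; with the concavity of `Φ` in `μ`, the objective
`α Φ(f/α; A x) − G(x) + α ln(2/ε)` is convex in `α` and concave in `x`. As `F` is symmetric and
`Φ(0; μ) ≥ 0`, the perspective is bounded below in `α`, and `ln(2/ε) ≥ 0`, so every infimum is
finite. Sion's minimax theorem, with the compact convex `𝒳` on the maximizing side, exchanges
`inf_α` and `sup_x`. Finally `Ψ₊(f, α) + α ln(2/ε)` is a supremum of jointly convex functions of
`(α, f)`, and minimizing a jointly convex function over `α` leaves a convex function of `f`.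
-/

open Matrix MeasureTheory Real

noncomputable section

open Set OrderDual

theorem csSup_image_add_const {ι : Type*} {K : Set ι} {u : ι → ℝ} (hK : K.Nonempty)
    (hu : BddAbove (u '' K)) (k : ℝ) : sSup ((fun x => u x + k) '' K) = sSup (u '' K) + k := by
  calc sSup ((fun x => u x + k) '' K) = sSup (OrderIso.addRight k '' (u '' K)) := by
        rw [image_image]; rfl
    _ = sSup (u '' K) + k := ((OrderIso.addRight k).map_csSup' (hK.image u) hu).symm

theorem bddBelow_image_csSup {α β : Type*} {X : Set α} {Y : Set β} {f : α → β → ℝ} {y₀ : β}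
    (hy₀ : y₀ ∈ Y) (hbdd : BddBelow ((f · y₀) '' X)) (habove : ∀ x ∈ X, BddAbove (f x '' Y)) :
    BddBelow ((fun x => sSup (f x '' Y)) '' X) := by
  obtain ⟨m, hm⟩ := hbdd
  refine ⟨m, ?_⟩
  rintro _ ⟨x, hx, rfl⟩
  exact (hm (mem_image_of_mem _ hx)).trans (le_csSup (habove x hx) (mem_image_of_mem _ hy₀))

section Perspective

variable {E : Type*} [AddCommGroup E] [Module ℝ E] {s : Set E} {φ : E → ℝ}

theorem inv_smul_add_smul_eq {a b α β : ℝ} (hα : α ≠ 0) (hβ : β ≠ 0) (u v : E) :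
    (a * α + b * β)⁻¹ • (a • u + b • v) =
      (a * α / (a * α + b * β)) • (α⁻¹ • u) + (b * β / (a * α + b * β)) • (β⁻¹ • v) := by
  rw [smul_add, smul_smul, smul_smul, smul_smul, smul_smul]
  congr 2 <;> field_simp

theorem ConvexOn.perspective_convex_combination (hφ : ConvexOn ℝ s φ) {α β a b : ℝ} {u v : E}
    (hα : 0 < α) (hβ : 0 < β) (hu : α⁻¹ • u ∈ s) (hv : β⁻¹ • v ∈ s)
    (ha : 0 ≤ a) (hb : 0 ≤ b) (hab : a + b = 1) :
    (0 < a * α + b * β ∧ (a * α + b * β)⁻¹ • (a • u + b • v) ∈ s) ∧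
      (a * α + b * β) * φ ((a * α + b * β)⁻¹ • (a • u + b • v)) ≤
        a * (α * φ (α⁻¹ • u)) + b * (β * φ (β⁻¹ • v)) := by
  have hγ : 0 < a * α + b * β := by simpa using convex_Ioi (0 : ℝ) hα hβ ha hb hab
  have hwa : 0 ≤ a * α / (a * α + b * β) := by positivity
  have hwb : 0 ≤ b * β / (a * α + b * β) := by positivity
  have hw : a * α / (a * α + b * β) + b * β / (a * α + b * β) = 1 := by field_simp
  rw [inv_smul_add_smul_eq hα.ne' hβ.ne']
  refine ⟨⟨hγ, hφ.1 hu hv hwa hwb hw⟩, ?_⟩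
  calc _ ≤ (a * α + b * β) * (a * α / (a * α + b * β) * φ (α⁻¹ • u) +
        b * β / (a * α + b * β) * φ (β⁻¹ • v)) :=
        mul_le_mul_of_nonneg_left (hφ.2 hu hv hwa hwb hw) hγ.le
    _ = _ := by field_simp

theorem ConvexOn.perspective (hφ : ConvexOn ℝ s φ) :
    ConvexOn ℝ {p : ℝ × E | 0 < p.1 ∧ p.1⁻¹ • p.2 ∈ s} (fun p => p.1 * φ (p.1⁻¹ • p.2)) :=
  ⟨fun _ hp _ hq _ _ ha hb hab => by
    simpa using (hφ.perspective_convex_combination hp.1 hq.1 hp.2 hq.2 ha hb hab).1,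
   fun _ hp _ hq _ _ ha hb hab => by
    simpa using (hφ.perspective_convex_combination hp.1 hq.1 hp.2 hq.2 ha hb hab).2⟩

theorem ConvexOn.perspective_le_add_of_le (hφ : ConvexOn ℝ s φ) (h0 : 0 ∈ s) {f : E}
    {α β : ℝ} (hα : 0 < α) (hαβ : α ≤ β) (hf : α⁻¹ • f ∈ s) :
    β * φ (β⁻¹ • f) ≤ α * φ (α⁻¹ • f) + (β - α) * φ 0 := by
  have hβ : 0 < β := hα.trans_le hαβ
  have ht : α / β ≤ 1 := (div_le_one hβ).mpr hαβ
  have hcomb : (α / β) • (α⁻¹ • f) + (1 - α / β) • (0 : E) = β⁻¹ • f := by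
    rw [smul_zero, add_zero, smul_smul]; congr 1; field_simp
  have h := hφ.2 hf h0 (by positivity) (sub_nonneg.mpr ht) (add_sub_cancel _ _)
  rw [hcomb, smul_eq_mul, smul_eq_mul] at h
  calc β * φ (β⁻¹ • f) ≤ β * (α / β * φ (α⁻¹ • f) + (1 - α / β) * φ 0) :=
        mul_le_mul_of_nonneg_left h hβ.le
    _ = α * φ (α⁻¹ • f) + (β - α) * φ 0 := by field_simp

theorem ConvexOn.bddBelow_perspective (hφ : ConvexOn ℝ s φ) (hneg : ∀ u ∈ s, -u ∈ s)
    (h0 : 0 ∈ s) (hφ0 : 0 ≤ φ 0) (f : E) :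
    BddBelow ((fun α => α * φ (α⁻¹ • f)) '' {α : ℝ | 0 < α ∧ α⁻¹ • f ∈ s}) := by
  rcases eq_empty_or_nonempty {α : ℝ | 0 < α ∧ α⁻¹ • f ∈ s} with hD | ⟨α₀, hα₀, hf₀⟩
  · simp [hD]
  refine ⟨min (-(α₀ * φ (-(α₀⁻¹ • f)))) (α₀ * φ (α₀⁻¹ • f) - α₀ * φ 0), ?_⟩
  rintro _ ⟨α, ⟨hα, hf⟩, rfl⟩
  -- compare with a fixed feasible `α₀`; beyond it, pass to `-f` through the midpoint `0`
  rcases le_total α₀ α with h | h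
  · have hmid : φ 0 ≤ 1 / 2 * φ (α⁻¹ • f) + 1 / 2 * φ (-(α⁻¹ • f)) := by
      have := hφ.2 hf (hneg _ hf) (by norm_num : (0 : ℝ) ≤ 1 / 2) (by norm_num : (0 : ℝ) ≤ 1 / 2)
        (by norm_num)
      rwa [← smul_add, add_neg_cancel, smul_zero] at this
    have hfar := hφ.perspective_le_add_of_le h0 hα₀ h (by rw [smul_neg]; exact hneg _ hf₀)
    rw [smul_neg, smul_neg] at hfar
    refine (min_le_left _ _).trans ?_
    nlinarith [mul_nonneg (add_nonneg hα.le hα₀.le) hφ0]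
  · have := hφ.perspective_le_add_of_le h0 hα h hf
    refine (min_le_right _ _).trans ?_
    nlinarith [mul_nonneg hα.le hφ0]

end Perspective

section ConvexProjection

variable {E F ι : Type*} [AddCommGroup E] [Module ℝ E] [AddCommGroup F] [Module ℝ F]

theorem convexOn_csSup_image {s : Set E} {K : Set ι} {h : ι → E → ℝ} (hK : K.Nonempty)
    (hh : ∀ i ∈ K, ConvexOn ℝ s (h i)) (hbdd : ∀ x ∈ s, BddAbove ((h · x) '' K)) :
    ConvexOn ℝ s (fun x => sSup ((h · x) '' K)) := by
  obtain ⟨i₀, hi₀⟩ := hK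
  refine ⟨(hh i₀ hi₀).1, fun x hx y hy a b ha hb hab => csSup_le ⟨_, mem_image_of_mem _ hi₀⟩ ?_⟩
  rintro _ ⟨i, hi, rfl⟩
  calc h i (a • x + b • y) ≤ a • h i x + b • h i y := (hh i hi).2 hx hy ha hb hab
    _ ≤ a • sSup ((h · x) '' K) + b • sSup ((h · y) '' K) := by
        gcongr <;> exact le_csSup (hbdd _ ‹_›) (mem_image_of_mem _ hi)

theorem ConvexOn.comp_prodMk_left {S : Set (F × E)} {h : F × E → ℝ} (hh : ConvexOn ℝ S h)
    (u : E) : ConvexOn ℝ {v | (v, u) ∈ S} (fun v => h (v, u)) := by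
  have hpair : ∀ {v w : F} {a b : ℝ}, a + b = 1 → a • (v, u) + b • (w, u) = (a • v + b • w, u) :=
    fun hab => by simp [← add_smul, hab]
  refine ⟨fun v hv w hw a b ha hb hab => ?_, fun v hv w hw a b ha hb hab => ?_⟩
  · show (_, u) ∈ S
    rw [← hpair hab]
    exact hh.1 hv hw ha hb hab
  · show h (_, u) ≤ _
    rw [← hpair hab]
    exact hh.2 hv hw ha hb hab

theorem ConvexOn.convexOn_csInf_fiber {S : Set (F × E)} {h : F × E → ℝ} (hh : ConvexOn ℝ S h)
    (hne : ∀ u, {v | (v, u) ∈ S}.Nonempty)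
    (hbdd : ∀ u, BddBelow ((fun v => h (v, u)) '' {v | (v, u) ∈ S})) :
    ConvexOn ℝ univ (fun u => sInf ((fun v => h (v, u)) '' {v | (v, u) ∈ S})) := by
  refine ⟨convex_univ, fun u₁ _ u₂ _ a b ha hb hab => le_of_forall_pos_le_add fun δ hδ => ?_⟩
  obtain ⟨_, ⟨v₁, hv₁, rfl⟩, h₁⟩ :=
    exists_lt_of_csInf_lt ((hne u₁).image _) (lt_add_of_pos_right _ hδ)
  obtain ⟨_, ⟨v₂, hv₂, rfl⟩, h₂⟩ :=
    exists_lt_of_csInf_lt ((hne u₂).image _) (lt_add_of_pos_right _ hδ)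
  calc sInf ((fun v => h (v, a • u₁ + b • u₂)) '' {v | (v, a • u₁ + b • u₂) ∈ S})
      ≤ h (a • v₁ + b • v₂, a • u₁ + b • u₂) :=
        csInf_le (hbdd _) ⟨_, by simpa using hh.1 hv₁ hv₂ ha hb hab, rfl⟩
    _ ≤ a • h (v₁, u₁) + b • h (v₂, u₂) := by simpa using hh.2 hv₁ hv₂ ha hb hab
    _ ≤ a • (sInf ((fun v => h (v, u₁)) '' {v | (v, u₁) ∈ S}) + δ) +
          b • (sInf ((fun v => h (v, u₂)) '' {v | (v, u₂) ∈ S}) + δ) := by gcongr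
    _ = _ := by simp only [smul_eq_mul]; linear_combination δ * hab

end ConvexProjection

section Minimax

variable {E F : Type*} [TopologicalSpace E] [AddCommGroup E] [Module ℝ E]
  [IsTopologicalAddGroup E] [ContinuousSMul ℝ E] [TopologicalSpace F] [AddCommGroup F]
  [Module ℝ F] [IsTopologicalAddGroup F] [ContinuousSMul ℝ F] {X : Set E} {Y : Set F}
  {f : E → F → ℝ}

theorem csInf_image_csSup_eq_csSup_image_csInf (hX : Convex ℝ X) (hXne : X.Nonempty)
    (hY : Convex ℝ Y) (hYne : Y.Nonempty) (hYc : IsCompact Y)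
    (hlsc : ∀ y ∈ Y, LowerSemicontinuousOn (f · y) X) (hqcvx : ∀ y ∈ Y, QuasiconvexOn ℝ X (f · y))
    (husc : ∀ x ∈ X, UpperSemicontinuousOn (f x) Y) (hqccv : ∀ x ∈ X, QuasiconcaveOn ℝ Y (f x))
    (hbdd : ∀ y ∈ Y, BddBelow ((f · y) '' X)) :
    sInf ((fun x => sSup (f x '' Y)) '' X) = sSup ((fun y => sInf ((f · y) '' X)) '' Y) := by
  have habove : ∀ x ∈ X, BddAbove (f x '' Y) := fun x hx => by
    obtain ⟨y, -, hy⟩ := (husc x hx).exists_isMaxOn hYne hYc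
    exact ⟨f x y, by rintro _ ⟨y', hy', rfl⟩; exact hy hy'⟩
  obtain ⟨y₀, hy₀⟩ := hYne
  obtain ⟨x₀, hx₀⟩ := hXne
  have hinf_le : BddAbove ((fun y => sInf ((f · y) '' X)) '' Y) := by
    refine ⟨sSup (f x₀ '' Y), ?_⟩
    rintro _ ⟨y, hy, rfl⟩
    exact (csInf_le (hbdd y hy) (mem_image_of_mem _ hx₀)).trans
      (le_csSup (habove x₀ hx₀) (mem_image_of_mem _ hy))
  -- Sion's theorem for `toDual ∘ f`, in which `Y` becomes the compact side to minimize over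
  refine (Sion.minimax (β := ℝᵒᵈ) (f := fun y x => toDual (f x y)) ⟨y₀, hy₀⟩ hYc husc
    (fun x hx => (hqccv x hx).dual) hX hlsc (fun y hy => (hqcvx y hy).dual) hY
    (fun y => toDual (sInf ((f · y) '' X)))
    (fun y hy => (isGLB_csInf ⟨_, mem_image_of_mem _ hx₀⟩ (hbdd y hy)).dual)
    _ (isLUB_csSup ⟨_, mem_image_of_mem _ hy₀⟩ hinf_le).dual
    (fun x => toDual (sSup (f x '' Y)))
    (fun x hx => (isLUB_csSup ⟨_, mem_image_of_mem _ hy₀⟩ (habove x hx)).dual)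
    _ (isGLB_csInf ⟨_, mem_image_of_mem _ hx₀⟩
      (bddBelow_image_csSup hy₀ (hbdd y₀ hy₀) habove)).dual).symm

end Minimax

theorem exists_pos_inv_smul_mem_of_zero_mem_interior {E : Type*} [AddCommGroup E]
    [Module ℝ E] [TopologicalSpace E] [ContinuousSMul ℝ E] {F : Set E} (hF : 0 ∈ interior F)
    (f : E) : {α : ℝ | 0 < α ∧ α⁻¹ • f ∈ F}.Nonempty := by
  obtain ⟨r, hr, hrF⟩ :=
    (absorbent_nhds_zero (𝕜 := ℝ) (mem_interior_iff_mem_nhds.mp hF) f).exists_pos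
  refine ⟨r, hr, (mem_smul_set_iff_inv_smul_mem₀ hr.ne' F f).mp ?_⟩
  exact hrF r (Real.norm_of_nonneg hr.le).ge rfl

theorem setOf_exists_inv_smul_mem_eq_image {E : Type*} [AddCommGroup E] [Module ℝ E]
    (F : Set E) (f : E) (h : ℝ → ℝ) :
    {t : ℝ | ∃ α : ℝ, 0 < α ∧ α⁻¹ • f ∈ F ∧ t = h α} = h '' {α | 0 < α ∧ α⁻¹ • f ∈ F} := by
  ext
  simp [eq_comm, and_assoc]

section Objective

variable {E V W : Type*} {F : Set E} {M : Set V} {Φ : E → V → ℝ} {𝒳 : Set W} {G : W → ℝ}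

theorem continuousOn_objective [NormedAddCommGroup E] [NormedSpace ℝ E] [TopologicalSpace V]
    [TopologicalSpace W] {A : W → V} (hΦ : ContinuousOn (fun p : E × V => Φ p.1 p.2) (F ×ˢ M))
    (hA : Continuous A) (hAM : ∀ x ∈ 𝒳, A x ∈ M) (hG : Continuous G) (f : E) (L : ℝ) :
    ContinuousOn (Function.uncurry fun α x => α * Φ (α⁻¹ • f) (A x) - G x + α * L)
      ({α | 0 < α ∧ α⁻¹ • f ∈ F} ×ˢ 𝒳) := by
  have hpair : ContinuousOn (fun q : ℝ × W => (q.1⁻¹ • f, A q.2))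
      ({α | 0 < α ∧ α⁻¹ • f ∈ F} ×ˢ 𝒳) :=
    ((continuousOn_fst.inv₀ fun q hq => hq.1.1.ne').smul continuousOn_const).prodMk
      (hA.comp continuous_snd).continuousOn
  exact ((continuousOn_fst.mul (hΦ.comp hpair fun q hq => ⟨hq.1.2, hAM _ hq.2⟩)).sub
    (hG.comp continuous_snd).continuousOn).add (continuous_fst.mul continuous_const).continuousOn

variable [AddCommGroup E] [Module ℝ E]

theorem concaveOn_objective [AddCommGroup V] [Module ℝ V] [AddCommGroup W] [Module ℝ W]
    {A : W →ᵃ[ℝ] V} (hΦ : ∀ u ∈ F, ConcaveOn ℝ M (fun μ => Φ u μ))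
    (hAM : ∀ x ∈ 𝒳, A x ∈ M) (h𝒳 : Convex ℝ 𝒳) (hG : ConvexOn ℝ 𝒳 G) {f : E} {α : ℝ}
    (hα : 0 < α) (hf : α⁻¹ • f ∈ F) (L : ℝ) :
    ConcaveOn ℝ 𝒳 (fun x => α * Φ (α⁻¹ • f) (A x) - G x + α * L) :=
  (((((hΦ _ hf).comp_affineMap A).subset hAM h𝒳).smul hα.le).sub hG).add_const (α * L)

theorem convexOn_objective {μ : V} (hΦ : ConvexOn ℝ F (fun u => Φ u μ)) (k L : ℝ) :
    ConvexOn ℝ {p : ℝ × E | 0 < p.1 ∧ p.1⁻¹ • p.2 ∈ F}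
      (fun p => p.1 * Φ (p.1⁻¹ • p.2) μ - k + p.1 * L) :=
  ((hΦ.add_const L).perspective.add_const (-k)).congr fun p _ => by simp; ring

theorem bddBelow_objective {μ : V} (hΦ : ConvexOn ℝ F (fun u => Φ u μ)) (hneg : ∀ u ∈ F, -u ∈ F)
    (h0 : 0 ∈ F) (hΦ0 : 0 ≤ Φ 0 μ) (k : ℝ) {L : ℝ} (hL : 0 ≤ L) (f : E) :
    BddBelow ((fun α => α * Φ (α⁻¹ • f) μ - k + α * L) '' {α | 0 < α ∧ α⁻¹ • f ∈ F}) := by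
  obtain ⟨m, hm⟩ := hΦ.bddBelow_perspective hneg h0 hΦ0 f
  refine ⟨m - k, ?_⟩
  rintro _ ⟨α, hα, rfl⟩
  nlinarith [hm ⟨α, hα, rfl⟩, mul_nonneg hα.1.le hL]

end Objective

theorem psiPlus_add_mul_eq_csSup {nF nM nX : ℕ} {Φ : (Fin nF → ℝ) → (Fin nM → ℝ) → ℝ}
    {A : (Fin nX → ℝ) →ᵃ[ℝ] (Fin nM → ℝ)} {g : Fin nX → ℝ} {c : ℝ} {𝒳 : Set (Fin nX → ℝ)}
    {f : Fin nF → ℝ} {α L : ℝ} (h𝒳 : 𝒳.Nonempty)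
    (hbdd : BddAbove ((fun x => α * Φ (α⁻¹ • f) (A x) - (g ⬝ᵥ x + c) + α * L) '' 𝒳)) :
    PsiPlus Φ A g c 𝒳 f α + α * L =
      sSup ((fun x => α * Φ (α⁻¹ • f) (A x) - (g ⬝ᵥ x + c) + α * L) '' 𝒳) := by
  obtain ⟨m, hm⟩ := hbdd
  refine (csSup_image_add_const h𝒳 ⟨m - α * L, ?_⟩ _).symm
  rintro _ ⟨x, hx, rfl⟩
  linarith [hm ⟨x, hx, rfl⟩]

theorem statement12_general {nF nM nX : ℕ}
    (F : Set (Fin nF → ℝ))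
    (hFsymm : ∀ f ∈ F, -f ∈ F) (hF0 : 0 ∈ interior F)
    (M : Set (Fin nM → ℝ))
    (Φ : (Fin nF → ℝ) → (Fin nM → ℝ) → ℝ)
    (hΦcont : ContinuousOn (fun p : (Fin nF → ℝ) × (Fin nM → ℝ) => Φ p.1 p.2) (F ×ˢ M))
    (hΦconv : ∀ μ ∈ M, ConvexOn ℝ F (fun f => Φ f μ))
    (hΦconc : ∀ f ∈ F, ConcaveOn ℝ M (fun μ => Φ f μ))
    (hΦ0 : ∀ μ ∈ M, 0 ≤ Φ 0 μ)
    (𝒳 : Set (Fin nX → ℝ)) (h𝒳ne : 𝒳.Nonempty) (h𝒳conv : Convex ℝ 𝒳)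
    (h𝒳cpt : IsCompact 𝒳)
    (A : (Fin nX → ℝ) →ᵃ[ℝ] (Fin nM → ℝ)) (hA : ∀ x ∈ 𝒳, A x ∈ M)
    (g : Fin nX → ℝ) (c : ℝ) (ε : ℝ) (hε0 : 0 < ε) (hε1 : ε < 1) :
    (∀ f : Fin nF → ℝ,
      {t : ℝ | ∃ α : ℝ, 0 < α ∧ α⁻¹ • f ∈ F ∧
          t = PsiPlus Φ A g c 𝒳 f α + α * Real.log (2/ε)}.Nonempty ∧
      BddBelow {t : ℝ | ∃ α : ℝ, 0 < α ∧ α⁻¹ • f ∈ F ∧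
          t = PsiPlus Φ A g c 𝒳 f α + α * Real.log (2/ε)} ∧
      sInf {t : ℝ | ∃ α : ℝ, 0 < α ∧ α⁻¹ • f ∈ F ∧
          t = PsiPlus Φ A g c 𝒳 f α + α * Real.log (2/ε)}
        = sSup ((fun x => sInf {t : ℝ | ∃ α : ℝ, 0 < α ∧ α⁻¹ • f ∈ F ∧
            t = α * Φ (α⁻¹ • f) (A x) - (g ⬝ᵥ x + c) + α * Real.log (2/ε)}) '' 𝒳)) ∧
    ConvexOn ℝ Set.univ (fun f : Fin nF → ℝ =>
      sInf {t : ℝ | ∃ α : ℝ, 0 < α ∧ α⁻¹ • f ∈ F ∧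
          t = PsiPlus Φ A g c 𝒳 f α + α * Real.log (2/ε)}) := by
  set L := Real.log (2 / ε)
  have hL : 0 ≤ L := Real.log_nonneg (by rw [le_div_iff₀ hε0]; linarith)
  obtain ⟨x₀, hx₀⟩ := h𝒳ne
  have hD (f) := exists_pos_inv_smul_mem_of_zero_mem_interior hF0 f
  have hcont (f) := continuousOn_objective hΦcont A.continuous_of_finiteDimensional hA
    (by fun_prop : Continuous fun x => g ⬝ᵥ x + c) f L
  have hconv (x) (hx : x ∈ 𝒳) := convexOn_objective (hΦconv _ (hA x hx)) (g ⬝ᵥ x + c) L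
  have hbddAbove (f) (α) (hα : α ∈ {α | 0 < α ∧ α⁻¹ • f ∈ F}) :=
    h𝒳cpt.bddAbove_image ((hcont f).uncurry_left α hα)
  have hbddBelow (f) (x) (hx : x ∈ 𝒳) := bddBelow_objective (hΦconv _ (hA x hx)) hFsymm
    (interior_subset hF0) (hΦ0 _ (hA x hx)) (g ⬝ᵥ x + c) hL f
  have hbddOuter (f) := bddBelow_image_csSup hx₀ (hbddBelow f x₀ hx₀) (hbddAbove f)
  have hpsi (f) := image_congr fun α hα => psiPlus_add_mul_eq_csSup ⟨x₀, hx₀⟩ (hbddAbove f α hα)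
  simp only [setOf_exists_inv_smul_mem_eq_image, hpsi]
  refine ⟨fun f => ⟨(hD f).image _, hbddOuter f,
    csInf_image_csSup_eq_csSup_image_csInf ((hconv x₀ hx₀).comp_prodMk_left f).1 (hD f) h𝒳conv
      ⟨x₀, hx₀⟩ h𝒳cpt (fun x hx => ((hcont f).uncurry_right x hx).lowerSemicontinuousOn)
      (fun x hx => ((hconv x hx).comp_prodMk_left f).quasiconvexOn)
      (fun α hα => ((hcont f).uncurry_left α hα).upperSemicontinuousOn)
      (fun α hα => (concaveOn_objective hΦconc hA h𝒳conv
        (((dotProductBilin ℝ ℝ g).convexOn h𝒳conv).add_const c) hα.1 hα.2 L).quasiconcaveOn)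
      (hbddBelow f)⟩, ?_⟩
  exact ConvexOn.convexOn_csInf_fiber
    (convexOn_csSup_image ⟨x₀, hx₀⟩ hconv fun p hp => hbddAbove p.2 p.1 hp) hD hbddOuter

/-- under `Φ(0;μ) ≥ 0` on `M`, the quantity
`Ψ̂₊(f) = inf{Ψ₊(f,α) + α ln(2/ε) : α>0, f/α ∈ F}` is finite (the defining set is
nonempty and bounded below), it equals
`max_{x∈𝒳} inf{α·Φ(f/α;A(x)) − G(x) + α ln(2/ε) : α>0, f/α∈F}`, and `f ↦ Ψ̂₊(f)`
is convex on ℝ^{n_F}. -/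
theorem statement12 {nF nM nX : ℕ}
    (F : Set (Fin nF → ℝ)) (hFcl : IsClosed F) (hFconv : Convex ℝ F)
    (hFsymm : ∀ f ∈ F, -f ∈ F) (hF0 : 0 ∈ interior F)
    (M : Set (Fin nM → ℝ)) (hMcl : IsClosed M) (hMconv : Convex ℝ M)
    (Φ : (Fin nF → ℝ) → (Fin nM → ℝ) → ℝ)
    (hΦcont : ContinuousOn (fun p : (Fin nF → ℝ) × (Fin nM → ℝ) => Φ p.1 p.2) (F ×ˢ M))
    (hΦconv : ∀ μ ∈ M, ConvexOn ℝ F (fun f => Φ f μ))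
    (hΦconc : ∀ f ∈ F, ConcaveOn ℝ M (fun μ => Φ f μ))
    (hΦ0 : ∀ μ ∈ M, 0 ≤ Φ 0 μ)
    (𝒳 : Set (Fin nX → ℝ)) (h𝒳ne : 𝒳.Nonempty) (h𝒳conv : Convex ℝ 𝒳)
    (h𝒳cpt : IsCompact 𝒳)
    (X : Set (Fin nX → ℝ)) (hXne : X.Nonempty) (hX𝒳 : X ⊆ 𝒳)
    (A : (Fin nX → ℝ) →ᵃ[ℝ] (Fin nM → ℝ)) (hA : ∀ x ∈ 𝒳, A x ∈ M)
    (g : Fin nX → ℝ) (c : ℝ) (ε : ℝ) (hε0 : 0 < ε) (hε1 : ε < 1) :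
    (∀ f : Fin nF → ℝ,
      {t : ℝ | ∃ α : ℝ, 0 < α ∧ α⁻¹ • f ∈ F ∧
          t = PsiPlus Φ A g c 𝒳 f α + α * Real.log (2/ε)}.Nonempty ∧
      BddBelow {t : ℝ | ∃ α : ℝ, 0 < α ∧ α⁻¹ • f ∈ F ∧
          t = PsiPlus Φ A g c 𝒳 f α + α * Real.log (2/ε)} ∧
      sInf {t : ℝ | ∃ α : ℝ, 0 < α ∧ α⁻¹ • f ∈ F ∧
          t = PsiPlus Φ A g c 𝒳 f α + α * Real.log (2/ε)}
        = sSup ((fun x => sInf {t : ℝ | ∃ α : ℝ, 0 < α ∧ α⁻¹ • f ∈ F ∧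
            t = α * Φ (α⁻¹ • f) (A x) - (g ⬝ᵥ x + c) + α * Real.log (2/ε)}) '' 𝒳)) ∧
    ConvexOn ℝ Set.univ (fun f : Fin nF → ℝ =>
      sInf {t : ℝ | ∃ α : ℝ, 0 < α ∧ α⁻¹ • f ∈ F ∧
          t = PsiPlus Φ A g c 𝒳 f α + α * Real.log (2/ε)}) :=
  statement12_general F hFsymm hF0 M Φ hΦcont hΦconv hΦconc hΦ0 𝒳 h𝒳ne h𝒳conv h𝒳cpt A hA g c ε hε0
    hε1

end
end

section
/- Assume in addition that Φ(0;μ) ≥ 0 for every μ∈M, and let ε∈(0,1). Define Ψ̂₊(f) = inf{ Ψ₊(f,α) + α·ln(2/ε) : α>0, f/α∈F } and Ψ̂₋(f) = inf{ Ψ₋(f,β) + β·ln(2/ε) : β>0, f/β∈F }. If f̄∈ℝ^{n_F}, κ̄∈ℝ, ρ̄∈ℝ satisfy Ψ̂₊(f̄) ≤ ρ̄ − κ̄ and Ψ̂₋(f̄) ≤ ρ̄ + κ̄, then for every x∈X and every Borel probability measure P on ℝ^{n_F} associated with x, Prob_{ω∼P}{ |⟨f̄,ω⟩ + κ̄ −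 G(x)| > ρ̄ } ≤ ε. -/
open Matrix MeasureTheory Real

noncomputable section

/-- `Ψ̂₊(f) = inf{Ψ₊(f,α) + α·r : α>0, f/α ∈ F}` (with `r` standing for `ln(2/ε)`,
or `K⁻¹ln(2/ε)` in the repeated-observations case). -/
def PsiHatPlus {nF nM nX : ℕ} (F : Set (Fin nF → ℝ))
    (Φ : (Fin nF → ℝ) → (Fin nM → ℝ) → ℝ)
    (A : (Fin nX → ℝ) →ᵃ[ℝ] (Fin nM → ℝ)) (g : Fin nX → ℝ) (c : ℝ)
    (𝒳 : Set (Fin nX → ℝ)) (r : ℝ) (f : Fin nF → ℝ) : ℝ :=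
  sInf {t : ℝ | ∃ α : ℝ, 0 < α ∧ α⁻¹ • f ∈ F ∧ t = PsiPlus Φ A g c 𝒳 f α + α * r}

/-- `Ψ̂₋(f) = inf{Ψ₋(f,β) + β·r : β>0, f/β ∈ F}`. -/
def PsiHatMinus {nF nM nX : ℕ} (F : Set (Fin nF → ℝ))
    (Φ : (Fin nF → ℝ) → (Fin nM → ℝ) → ℝ)
    (A : (Fin nX → ℝ) →ᵃ[ℝ] (Fin nM → ℝ)) (g : Fin nX → ℝ) (c : ℝ)
    (𝒳 : Set (Fin nX → ℝ)) (r : ℝ) (f : Fin nF → ℝ) : ℝ :=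
  sInf {t : ℝ | ∃ β : ℝ, 0 < β ∧ β⁻¹ • f ∈ F ∧ t = PsiMinus Φ A g c 𝒳 f β + β * r}

/-!
For admissible `α`, Markov's inequality for `e^{⟨f/α, ω⟩}`, the association bound
`ln E e^{⟨f/α, ω⟩} ≤ Φ(f/α; A(x))` and `αΦ(f/α; A(x)) − G(x) ≤ Ψ₊(f, α)` give
`P{⟨f, ω⟩ − G(x) ≥ t + η} ≤ e^{-r}` as soon as `Ψ₊(f, α) + α r < t + η`; since `Ψ̂₊(f) ≤ t`
such an `α` exists for every `η > 0`, and `η → 0` bounds `P{⟨f, ω⟩ − G(x) > t}`.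
With `r = ln(2/ε)` this is `ε/2` for the upper tail. The lower tail is the upper tail for
`(−f̄, −g, −c)`: `Ψ₋` is `Ψ₊` of these data and `F` is symmetric.
-/

open Filter Topology
open scoped ENNReal

section Tail

variable {Ω : Type*} [MeasurableSpace Ω] (μ : Measure Ω)

theorem measure_ge_le_exp_sub_of_lintegral_exp_le {X : Ω → ℝ} (hX : AEMeasurable X μ) {s B : ℝ}
    (hB : ∫⁻ ω, ENNReal.ofReal (exp (X ω)) ∂μ ≤ ENNReal.ofReal (exp B)) :
    μ {ω | s ≤ X ω} ≤ ENNReal.ofReal (exp (B - s)) :=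
  calc μ {ω | s ≤ X ω}
      ≤ μ {ω | ENNReal.ofReal (exp s) ≤ ENNReal.ofReal (exp (X ω))} :=
        measure_mono fun ω hω => ENNReal.ofReal_le_ofReal (exp_le_exp.2 hω)
    _ ≤ (∫⁻ ω, ENNReal.ofReal (exp (X ω)) ∂μ) / ENNReal.ofReal (exp s) :=
        meas_ge_le_lintegral_div hX.exp.ennreal_ofReal (by positivity) ENNReal.ofReal_ne_top
    _ ≤ ENNReal.ofReal (exp B) / ENNReal.ofReal (exp s) := by gcongr
    _ = ENNReal.ofReal (exp (B - s)) := by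
        rw [exp_sub, ENNReal.ofReal_div_of_pos (exp_pos s)]

theorem measure_gt_le_of_forall_add_le {X : Ω → ℝ} {t : ℝ} {b : ℝ≥0∞}
    (h : ∀ η > 0, μ {ω | t + η ≤ X ω} ≤ b) : μ {ω | t < X ω} ≤ b := by
  have hunion : {ω | t < X ω} = ⋃ n : ℕ, {ω | t + 1 / ((n : ℝ) + 1) ≤ X ω} := by
    ext ω
    simp only [Set.mem_ofPred_eq, Set.mem_iUnion]
    constructor
    · intro hlt
      obtain ⟨n, hn⟩ := exists_nat_one_div_lt (sub_pos.2 hlt)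
      exact ⟨n, by linarith⟩
    · rintro ⟨n, hn⟩
      linarith [Nat.one_div_pos_of_nat (α := ℝ) (n := n)]
  have hmono : Monotone fun n : ℕ => {ω | t + 1 / ((n : ℝ) + 1) ≤ X ω} := by
    intro m n hmn ω (hω : t + 1 / ((m : ℝ) + 1) ≤ X ω)
    have hle : 1 / ((n : ℝ) + 1) ≤ 1 / ((m : ℝ) + 1) := Nat.one_div_le_one_div hmn
    exact le_trans (by linarith) hω
  rw [hunion, hmono.measure_iUnion]
  exact iSup_le fun n => h _ Nat.one_div_pos_of_nat

end Tail

theorem exists_inv_smul_mem_of_zero_mem_interior {E : Type*} [AddCommGroup E] [Module ℝ E]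
    [TopologicalSpace E] [ContinuousSMul ℝ E] {F : Set E} (hF0 : 0 ∈ interior F) (f : E) :
    ∃ α : ℝ, 0 < α ∧ α⁻¹ • f ∈ F := by
  have hlim : Tendsto (fun α : ℝ => α⁻¹ • f) atTop (𝓝 0) := by
    simpa using (tendsto_inv_atTop_zero (𝕜 := ℝ)).smul_const f
  exact ((eventually_gt_atTop 0).and (hlim.eventually (mem_interior_iff_mem_nhds.1 hF0))).exists

section Psi

variable {nF nM nX : ℕ} {F : Set (Fin nF → ℝ)} {M : Set (Fin nM → ℝ)}
  {Φ : (Fin nF → ℝ) → (Fin nM → ℝ) → ℝ} {A : (Fin nX → ℝ) →ᵃ[ℝ] (Fin nM → ℝ)}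
  {g : Fin nX → ℝ} {c : ℝ} {𝒳 : Set (Fin nX → ℝ)}

theorem psiMinus_eq_psiPlus_neg (f : Fin nF → ℝ) (β : ℝ) :
    PsiMinus Φ A g c 𝒳 f β = PsiPlus Φ A (-g) (-c) 𝒳 (-f) β := by
  simp only [PsiMinus, PsiPlus, smul_neg, neg_dotProduct, ← neg_add, sub_neg_eq_add]

theorem psiHatMinus_eq_psiHatPlus_neg (hF : ∀ f ∈ F, -f ∈ F) (r : ℝ) (f : Fin nF → ℝ) :
    PsiHatMinus F Φ A g c 𝒳 r f = PsiHatPlus F Φ A (-g) (-c) 𝒳 r (-f) := by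
  have hmem (β : ℝ) : β⁻¹ • f ∈ F ↔ β⁻¹ • -f ∈ F := by
    rw [smul_neg]
    exact ⟨hF _, fun h => neg_neg (β⁻¹ • f) ▸ hF _ h⟩
  simp only [PsiHatMinus, PsiHatPlus, psiMinus_eq_psiPlus_neg, hmem]

theorem le_psiPlus
    (hΦ : ContinuousOn (fun p : (Fin nF → ℝ) × (Fin nM → ℝ) => Φ p.1 p.2) (F ×ˢ M))
    (hA : ∀ x ∈ 𝒳, A x ∈ M) (h𝒳 : IsCompact 𝒳) {f : Fin nF → ℝ} {α : ℝ} (hf : α⁻¹ • f ∈ F)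
    {x : Fin nX → ℝ} (hx : x ∈ 𝒳) :
    α * Φ (α⁻¹ • f) (A x) - (g ⬝ᵥ x + c) ≤ PsiPlus Φ A g c 𝒳 f α := by
  have hΦA : ContinuousOn (fun x => Φ (α⁻¹ • f) (A x)) 𝒳 :=
    hΦ.comp (continuous_const.prodMk A.continuous_of_finiteDimensional).continuousOn
      fun x hx => Set.mk_mem_prod hf (hA x hx)
  have hcont : ContinuousOn (fun x => α * Φ (α⁻¹ • f) (A x) - (g ⬝ᵥ x + c)) 𝒳 :=
    (continuousOn_const.mul hΦA).sub (by fun_prop)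
  exact le_csSup (h𝒳.image_of_continuousOn hcont).bddAbove ⟨x, hx, rfl⟩

theorem exists_psiPlus_lt_of_psiHatPlus_lt {f : Fin nF → ℝ}
    (hadm : ∃ α : ℝ, 0 < α ∧ α⁻¹ • f ∈ F) {r t : ℝ} (h : PsiHatPlus F Φ A g c 𝒳 r f < t) :
    ∃ α : ℝ, 0 < α ∧ α⁻¹ • f ∈ F ∧ PsiPlus Φ A g c 𝒳 f α + α * r < t := by
  obtain ⟨α₀, hα₀, hf₀⟩ := hadm
  rw [PsiHatPlus] at h
  obtain ⟨_, ⟨α, hα, hf, rfl⟩, hlt⟩ := exists_lt_of_csInf_lt (by exact ⟨_, α₀, hα₀, hf₀, rfl⟩) h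
  exact ⟨α, hα, hf, hlt⟩

theorem measure_gt_le_exp_neg_of_psiHatPlus_le
    (hΦ : ContinuousOn (fun p : (Fin nF → ℝ) × (Fin nM → ℝ) => Φ p.1 p.2) (F ×ˢ M))
    (hA : ∀ x ∈ 𝒳, A x ∈ M) (h𝒳 : IsCompact 𝒳) {f : Fin nF → ℝ}
    (hadm : ∃ α : ℝ, 0 < α ∧ α⁻¹ • f ∈ F)
    {x : Fin nX → ℝ} (hx : x ∈ 𝒳) {P : Measure (Fin nF → ℝ)} (hP : AssocWith Φ F (A x) P)
    {r t : ℝ} (hΨ : PsiHatPlus F Φ A g c 𝒳 r f ≤ t) :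
    P {ω | t < f ⬝ᵥ ω - (g ⬝ᵥ x + c)} ≤ ENNReal.ofReal (exp (-r)) := by
  refine measure_gt_le_of_forall_add_le P fun η hη => ?_
  obtain ⟨α, hα, hf, hlt⟩ :=
    exists_psiPlus_lt_of_psiHatPlus_lt hadm (hΨ.trans_lt (lt_add_of_pos_right t hη))
  have hsup := le_psiPlus (g := g) (c := c) hΦ hA h𝒳 hf hx
  set s := α⁻¹ * (t + η + (g ⬝ᵥ x + c))
  have hαs : α * s = t + η + (g ⬝ᵥ x + c) := by simp only [s]; field_simp
  have hevent : {ω | t + η ≤ f ⬝ᵥ ω - (g ⬝ᵥ x + c)} = {ω | s ≤ (α⁻¹ • f) ⬝ᵥ ω} := by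
    ext ω
    simp only [Set.mem_ofPred_eq, smul_dotProduct, smul_eq_mul, s]
    rw [mul_le_mul_iff_right₀ (inv_pos.2 hα)]
    constructor <;> intro <;> linarith
  have hexponent : Φ (α⁻¹ • f) (A x) - s ≤ -r := by
    rw [← mul_le_mul_iff_right₀ hα, mul_sub, hαs]
    linarith
  rw [hevent]
  calc P {ω | s ≤ (α⁻¹ • f) ⬝ᵥ ω} ≤ ENNReal.ofReal (exp (Φ (α⁻¹ • f) (A x) - s)) :=
        measure_ge_le_exp_sub_of_lintegral_exp_le P (by fun_prop) (hP _ hf)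
    _ ≤ ENNReal.ofReal (exp (-r)) := by gcongr

end Psi

theorem statement13_general {nF nM nX : ℕ}
    (F : Set (Fin nF → ℝ))
    (hFsymm : ∀ f ∈ F, -f ∈ F) (hF0 : 0 ∈ interior F)
    (M : Set (Fin nM → ℝ))
    (Φ : (Fin nF → ℝ) → (Fin nM → ℝ) → ℝ)
    (hΦcont : ContinuousOn (fun p : (Fin nF → ℝ) × (Fin nM → ℝ) => Φ p.1 p.2) (F ×ˢ M))
    (𝒳 : Set (Fin nX → ℝ))
    (h𝒳cpt : IsCompact 𝒳)
    (X : Set (Fin nX → ℝ)) (hX𝒳 : X ⊆ 𝒳)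
    (A : (Fin nX → ℝ) →ᵃ[ℝ] (Fin nM → ℝ)) (hA : ∀ x ∈ 𝒳, A x ∈ M)
    (g : Fin nX → ℝ) (c : ℝ) (ε : ℝ) (hε0 : 0 < ε)
    (fbar : Fin nF → ℝ) (κbar ρbar : ℝ)
    (hplus : PsiHatPlus F Φ A g c 𝒳 (Real.log (2/ε)) fbar ≤ ρbar - κbar)
    (hminus : PsiHatMinus F Φ A g c 𝒳 (Real.log (2/ε)) fbar ≤ ρbar + κbar)
    (x : Fin nX → ℝ) (hx : x ∈ X)
    (P : Measure (Fin nF → ℝ))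
    (hassoc : AssocWith Φ F (A x) P) :
    P {ω | ρbar < |fbar ⬝ᵥ ω + κbar - (g ⬝ᵥ x + c)|} ≤ ENNReal.ofReal ε := by
  have hhalf : ENNReal.ofReal (exp (-log (2 / ε))) = ENNReal.ofReal (ε / 2) := by
    rw [exp_neg, exp_log (by positivity), inv_div]
  have hupper := measure_gt_le_exp_neg_of_psiHatPlus_le hΦcont hA h𝒳cpt
    (exists_inv_smul_mem_of_zero_mem_interior hF0 fbar) (hX𝒳 hx) hassoc hplus
  rw [psiHatMinus_eq_psiHatPlus_neg hFsymm] at hminus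
  have hlower := measure_gt_le_exp_neg_of_psiHatPlus_le hΦcont hA h𝒳cpt
    (exists_inv_smul_mem_of_zero_mem_interior hF0 (-fbar)) (hX𝒳 hx) hassoc hminus
  have hsplit : {ω | ρbar < |fbar ⬝ᵥ ω + κbar - (g ⬝ᵥ x + c)|} ⊆
      {ω | ρbar - κbar < fbar ⬝ᵥ ω - (g ⬝ᵥ x + c)} ∪
        {ω | ρbar + κbar < -fbar ⬝ᵥ ω - (-g ⬝ᵥ x + -c)} := by
    intro ω hω
    simp only [Set.mem_ofPred_eq, Set.mem_union, neg_dotProduct, lt_abs] at hω ⊢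
    rcases hω with h | h
    · left; linarith
    · right; linarith
  calc P {ω | ρbar < |fbar ⬝ᵥ ω + κbar - (g ⬝ᵥ x + c)|}
      ≤ ENNReal.ofReal (ε / 2) + ENNReal.ofReal (ε / 2) :=
        (measure_mono hsplit).trans <| (measure_union_le _ _).trans <|
          add_le_add (hupper.trans_eq hhalf) (hlower.trans_eq hhalf)
    _ = ENNReal.ofReal ε := by
        rw [← ENNReal.ofReal_add (by positivity) (by positivity), add_halves]

/-- risk bound for the affine estimate built from a feasible solution
of the system `Ψ̂₊(f̄) ≤ ρ̄ − κ̄`, `Ψ̂₋(f̄) ≤ ρ̄ + κ̄`. -/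
theorem statement13 {nF nM nX : ℕ}
    (F : Set (Fin nF → ℝ)) (hFcl : IsClosed F) (hFconv : Convex ℝ F)
    (hFsymm : ∀ f ∈ F, -f ∈ F) (hF0 : 0 ∈ interior F)
    (M : Set (Fin nM → ℝ)) (hMcl : IsClosed M) (hMconv : Convex ℝ M)
    (Φ : (Fin nF → ℝ) → (Fin nM → ℝ) → ℝ)
    (hΦcont : ContinuousOn (fun p : (Fin nF → ℝ) × (Fin nM → ℝ) => Φ p.1 p.2) (F ×ˢ M))
    (hΦconv : ∀ μ ∈ M, ConvexOn ℝ F (fun f => Φ f μ))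
    (hΦconc : ∀ f ∈ F, ConcaveOn ℝ M (fun μ => Φ f μ))
    (hΦ0 : ∀ μ ∈ M, 0 ≤ Φ 0 μ)
    (𝒳 : Set (Fin nX → ℝ)) (h𝒳ne : 𝒳.Nonempty) (h𝒳conv : Convex ℝ 𝒳)
    (h𝒳cpt : IsCompact 𝒳)
    (X : Set (Fin nX → ℝ)) (hXne : X.Nonempty) (hX𝒳 : X ⊆ 𝒳)
    (A : (Fin nX → ℝ) →ᵃ[ℝ] (Fin nM → ℝ)) (hA : ∀ x ∈ 𝒳, A x ∈ M)
    (g : Fin nX → ℝ) (c : ℝ) (ε : ℝ) (hε0 : 0 < ε) (hε1 : ε < 1)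
    (fbar : Fin nF → ℝ) (κbar ρbar : ℝ)
    (hplus : PsiHatPlus F Φ A g c 𝒳 (Real.log (2/ε)) fbar ≤ ρbar - κbar)
    (hminus : PsiHatMinus F Φ A g c 𝒳 (Real.log (2/ε)) fbar ≤ ρbar + κbar)
    (x : Fin nX → ℝ) (hx : x ∈ X)
    (P : Measure (Fin nF → ℝ)) [IsProbabilityMeasure P]
    (hassoc : AssocWith Φ F (A x) P) :
    P {ω | ρbar < |fbar ⬝ᵥ ω + κbar - (g ⬝ᵥ x + c)|} ≤ ENNReal.ofReal ε :=
  statement13_general F hFsymm hF0 M Φ hΦcont 𝒳 h𝒳cpt X hX𝒳 A hA g c ε hε0 fbar κbar ρbar hplus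
    hminus x hx P hassoc

end
end

section
/- Assume in addition that Φ(0;μ) ≥ 0 for every μ∈M, let ε∈(0,1), and let K be a positive integer. Define Ψ̂₊(f) = inf{ Ψ₊(f,α) + K^{−1}α·ln(2/ε) : α>0, f/α∈F } and Ψ̂₋(f) = inf{ Ψ₋(f,β) + K^{−1}β·ln(2/ε) : β>0, f/β∈F }. If f̄∈ℝ^{n_F}, κ̄∈ℝ, ρ̄∈ℝ satisfy Ψ̂₊(f̄) ≤ ρ̄ − κ̄ and Ψ̂₋(f̄) ≤ ρ̄ + κ̄, then for every x∈X and every Borel probability measure P on ℝ^{n_F} associated with x, the estimate ĝ(ω^K) = ⟨f̄, (1/K)Σ_{i=1}^K ω_i⟩ + κ̄ satisfies Prob_{ω^K∼P^K}{ |ĝ(ω^K) − G(x)| > ρ̄ } ≤ ε, where P^K is the distribution of a K-tuple ω^K=(ω_1,…,ω_K) of independent draws from P. -/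
open Matrix MeasureTheory Real
noncomputable section

lemma dot_sum {nF : ℕ} {K : ℕ} (f : Fin nF → ℝ) (v : Fin K → Fin nF → ℝ) :
    f ⬝ᵥ (∑ i, v i) = ∑ i, f ⬝ᵥ v i := by
  simp only [dotProduct, Finset.sum_apply, Finset.mul_sum]
  exact Finset.sum_comm

lemma lintegral_pi_pow {E : Type*} [MeasurableSpace E] (μ : Measure E) [IsProbabilityMeasure μ]
    (f : E → ENNReal) (hf : Measurable f) (n : ℕ) :
    ∫⁻ x, ∏ i, f (x i) ∂(Measure.pi fun _ : Fin n => μ) = (∫⁻ y, f y ∂μ) ^ n := by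
  induction n with
  | zero => simp
  | succ n ih =>
    have h := (measurePreserving_piFinSuccAbove (fun _ : Fin (n+1) => μ) 0)
    have hmeas : Measurable fun p : E × (Fin n → E) => f p.1 * ∏ j, f (p.2 j) := by
      exact (hf.comp measurable_fst).mul
        (Finset.measurable_prod _ fun j _ => hf.comp ((measurable_pi_apply j).comp measurable_snd))
    have := h.lintegral_comp hmeas
    have hcomp : ∀ x : Fin (n+1) → E,
        (fun p : E × (Fin n → E) => f p.1 * ∏ j, f (p.2 j))
          ((MeasurableEquiv.piFinSuccAbove (fun _ => E) 0) x) = ∏ i, f (x i) := by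
      intro x
      rw [Fin.prod_univ_succ]
      rfl
    simp only [hcomp] at this
    rw [this, lintegral_prod_mul (f := f) (g := fun y : Fin n → E => ∏ j, f (y j))
      hf.aemeasurable
      (Finset.measurable_prod _ fun j _ => hf.comp (measurable_pi_apply j)).aemeasurable, ih,
      pow_succ, mul_comm]

lemma dot_measurable {nF K : ℕ} (h : Fin nF → ℝ) :
    Measurable fun ω : Fin K → Fin nF → ℝ => ∑ i, h ⬝ᵥ ω i := by
  apply Finset.measurable_sum
  intro i _
  simp only [dotProduct]
  exact Finset.measurable_sum _ fun j _ =>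
    (measurable_const.mul ((measurable_pi_apply j).comp (measurable_pi_apply i)))

lemma tail_bound {nF K : ℕ} (P : Measure (Fin nF → ℝ)) [IsProbabilityMeasure P]
    (h : Fin nF → ℝ) (C u : ℝ)
    (hi : ∫⁻ ω, ENNReal.ofReal (Real.exp (h ⬝ᵥ ω)) ∂P ≤ ENNReal.ofReal (Real.exp C)) :
    (Measure.pi fun _ : Fin K => P) {ω | u < ∑ i, h ⬝ᵥ ω i}
      ≤ ENNReal.ofReal (Real.exp ((K:ℝ) * C - u)) := by
  set μ := Measure.pi fun _ : Fin K => P with hμ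
  set f : (Fin K → Fin nF → ℝ) → ENNReal :=
    fun ω => ENNReal.ofReal (Real.exp (∑ i, h ⬝ᵥ ω i)) with hfdef
  have hfmeas : Measurable f :=
    (Real.measurable_exp.comp (dot_measurable h)).ennreal_ofReal
  have hbase : Measurable fun y : Fin nF → ℝ => ENNReal.ofReal (Real.exp (h ⬝ᵥ y)) := by
    apply Measurable.ennreal_ofReal
    apply Real.measurable_exp.comp
    show Measurable fun y : Fin nF → ℝ => ∑ j, h j * y j
    exact Finset.measurable_sum _ fun j _ => measurable_const.mul (measurable_pi_apply j)
  have hInt : ∫⁻ ω, f ω ∂μ ≤ ENNReal.ofReal (Real.exp ((K:ℝ) * C)) := by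
    have heq : ∫⁻ ω, f ω ∂μ = (∫⁻ y, ENNReal.ofReal (Real.exp (h ⬝ᵥ y)) ∂P) ^ K := by
      rw [← lintegral_pi_pow P _ hbase K]
      apply lintegral_congr
      intro ω
      show ENNReal.ofReal (Real.exp (∑ i, h ⬝ᵥ ω i)) = _
      rw [Real.exp_sum, ENNReal.ofReal_prod_of_nonneg fun i _ => (Real.exp_pos _).le]
    rw [heq]
    calc (∫⁻ y, ENNReal.ofReal (Real.exp (h ⬝ᵥ y)) ∂P) ^ K
        ≤ ENNReal.ofReal (Real.exp C) ^ K := pow_le_pow_left' hi K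
      _ = ENNReal.ofReal (Real.exp C ^ K) := (ENNReal.ofReal_pow (Real.exp_pos _).le K).symm
      _ = ENNReal.ofReal (Real.exp ((K:ℝ) * C)) := by rw [← Real.exp_nat_mul]
  have hsub : {ω : Fin K → Fin nF → ℝ | u < ∑ i, h ⬝ᵥ ω i}
      ⊆ {ω | ENNReal.ofReal (Real.exp u) ≤ f ω} := by
    intro ω hω
    exact ENNReal.ofReal_le_ofReal (Real.exp_le_exp.2 (le_of_lt hω))
  have hmk := mul_meas_ge_le_lintegral (μ := μ) hfmeas (ENNReal.ofReal (Real.exp u))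
  have h1 : μ {ω | u < ∑ i, h ⬝ᵥ ω i} ≤ μ {ω | ENNReal.ofReal (Real.exp u) ≤ f ω} :=
    measure_mono hsub
  have h2 : μ {ω | ENNReal.ofReal (Real.exp u) ≤ f ω}
      ≤ ENNReal.ofReal (Real.exp ((K:ℝ) * C)) / ENNReal.ofReal (Real.exp u) := by
    rw [ENNReal.le_div_iff_mul_le (Or.inl (by simp [Real.exp_pos])) (Or.inl ENNReal.ofReal_ne_top)]
    calc μ {ω | ENNReal.ofReal (Real.exp u) ≤ f ω} * ENNReal.ofReal (Real.exp u)
        = ENNReal.ofReal (Real.exp u) * μ {ω | ENNReal.ofReal (Real.exp u) ≤ f ω} := mul_comm _ _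
      _ ≤ ∫⁻ ω, f ω ∂μ := hmk
      _ ≤ _ := hInt
  refine (h1.trans h2).trans (le_of_eq ?_)
  rw [← ENNReal.ofReal_div_of_pos (Real.exp_pos _), ← Real.exp_sub]

lemma side_bound {nF K : ℕ} (hK : 1 ≤ K) (P : Measure (Fin nF → ℝ)) [IsProbabilityMeasure P]
    (f' : Fin nF → ℝ) (α C L a : ℝ) (hα : 0 < α)
    (hi : ∫⁻ ω, ENNReal.ofReal (Real.exp ((α⁻¹ • f') ⬝ᵥ ω)) ∂P ≤ ENNReal.ofReal (Real.exp C))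
    (hC : α * C + α * ((K:ℝ)⁻¹ * L) ≤ a) :
    (Measure.pi fun _ : Fin K => P) {ω | a < f' ⬝ᵥ ((K:ℝ)⁻¹ • ∑ i, ω i)}
      ≤ ENNReal.ofReal (Real.exp (-L)) := by
  have hKpos : (0:ℝ) < K := by exact_mod_cast hK
  have hset : {ω : Fin K → Fin nF → ℝ | a < f' ⬝ᵥ ((K:ℝ)⁻¹ • ∑ i, ω i)}
      = {ω | (K:ℝ)/α * a < ∑ i, (α⁻¹ • f') ⬝ᵥ ω i} := by
    ext ω
    have hEq : ∑ i, (α⁻¹ • f') ⬝ᵥ ω i = (K:ℝ)/α * (f' ⬝ᵥ ((K:ℝ)⁻¹ • ∑ i, ω i)) := by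
      simp only [smul_dotProduct, dotProduct_smul, smul_eq_mul]
      rw [dot_sum, ← Finset.mul_sum]
      field_simp
    simp only [Set.mem_setOf_eq, hEq]
    exact (mul_lt_mul_iff_right₀ (div_pos hKpos hα)).symm
  rw [hset]
  refine (tail_bound P (α⁻¹ • f') C ((K:ℝ)/α * a) hi).trans
    (ENNReal.ofReal_le_ofReal (Real.exp_le_exp.2 ?_))
  have h3 := mul_le_mul_of_nonneg_left hC (le_of_lt (div_pos hKpos hα))
  have e1 : (K:ℝ)/α * (α * C) = (K:ℝ) * C := by field_simp
  have e2 : (K:ℝ)/α * (α * ((K:ℝ)⁻¹ * L)) = L := by field_simp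
  nlinarith [h3, e1, e2]

lemma exists_mem_lt_of_sInf_le' {S : Set ℝ} (hne : S.Nonempty) {b δ : ℝ} (hδ : 0 < δ)
    (h : sInf S ≤ b) : ∃ t ∈ S, t < b + δ := by
  by_contra hc
  push_neg at hc
  have := le_csInf hne fun t ht => hc t ht
  linarith

lemma feas_exists {nF : ℕ} {F : Set (Fin nF → ℝ)} (hF0 : 0 ∈ interior F)
    (f' : Fin nF → ℝ) : ∃ α : ℝ, 0 < α ∧ α⁻¹ • f' ∈ F := by
  obtain ⟨r0, hr0, hball⟩ : ∃ r0 > 0, Metric.ball (0 : Fin nF → ℝ) r0 ⊆ F :=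
    Metric.mem_nhds_iff.1 (mem_interior_iff_mem_nhds.1 hF0)
  refine ⟨(‖f'‖ + 1)/r0, by positivity, hball ?_⟩
  rw [Metric.mem_ball, dist_zero_right, norm_smul, Real.norm_eq_abs,
    abs_of_nonneg (by positivity), inv_div, div_mul_eq_mul_div, div_lt_iff₀ (by positivity)]
  nlinarith [norm_nonneg f', hr0]
/-- repeated-observations version. The estimate
`ĝ(ω^K) = ⟨f̄, (1/K)Σᵢ ωᵢ⟩ + κ̄` built from a feasible solution of
`Ψ̂₊(f̄) ≤ ρ̄ − κ̄`, `Ψ̂₋(f̄) ≤ ρ̄ + κ̄` (with the `K⁻¹ α ln(2/ε)` penalty) has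
ε-risk at most `ρ̄`. -/
theorem statement14 {nF nM nX : ℕ}
    (F : Set (Fin nF → ℝ)) (hFcl : IsClosed F) (hFconv : Convex ℝ F)
    (hFsymm : ∀ f ∈ F, -f ∈ F) (hF0 : 0 ∈ interior F)
    (M : Set (Fin nM → ℝ)) (hMcl : IsClosed M) (hMconv : Convex ℝ M)
    (Φ : (Fin nF → ℝ) → (Fin nM → ℝ) → ℝ)
    (hΦcont : ContinuousOn (fun p : (Fin nF → ℝ) × (Fin nM → ℝ) => Φ p.1 p.2) (F ×ˢ M))
    (hΦconv : ∀ μ ∈ M, ConvexOn ℝ F (fun f => Φ f μ))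
    (hΦconc : ∀ f ∈ F, ConcaveOn ℝ M (fun μ => Φ f μ))
    (hΦ0 : ∀ μ ∈ M, 0 ≤ Φ 0 μ)
    (𝒳 : Set (Fin nX → ℝ)) (h𝒳ne : 𝒳.Nonempty) (h𝒳conv : Convex ℝ 𝒳)
    (h𝒳cpt : IsCompact 𝒳)
    (X : Set (Fin nX → ℝ)) (hXne : X.Nonempty) (hX𝒳 : X ⊆ 𝒳)
    (A : (Fin nX → ℝ) →ᵃ[ℝ] (Fin nM → ℝ)) (hA : ∀ x ∈ 𝒳, A x ∈ M)
    (g : Fin nX → ℝ) (c : ℝ) (ε : ℝ) (hε0 : 0 < ε) (hε1 : ε < 1)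
    (K : ℕ) (hK : 1 ≤ K)
    (fbar : Fin nF → ℝ) (κbar ρbar : ℝ)
    (hplus : PsiHatPlus F Φ A g c 𝒳 ((K : ℝ)⁻¹ * Real.log (2/ε)) fbar ≤ ρbar - κbar)
    (hminus : PsiHatMinus F Φ A g c 𝒳 ((K : ℝ)⁻¹ * Real.log (2/ε)) fbar ≤ ρbar + κbar)
    (x : Fin nX → ℝ) (hx : x ∈ X)
    (P : Measure (Fin nF → ℝ)) [IsProbabilityMeasure P]
    (hassoc : AssocWith Φ F (A x) P) :
    (Measure.pi fun _ : Fin K => P)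
        {ω | ρbar < |fbar ⬝ᵥ ((K : ℝ)⁻¹ • ∑ i, ω i) + κbar - (g ⬝ᵥ x + c)|}
      ≤ ENNReal.ofReal ε := by
  classical
  set G : ℝ := g ⬝ᵥ x + c with hG
  set L : ℝ := Real.log (2/ε) with hL
  set μK := Measure.pi fun _ : Fin K => P with hμK
  have hx𝒳 : x ∈ 𝒳 := hX𝒳 hx
  have hεhalf : Real.exp (-L) = ε / 2 := by
    rw [hL, Real.exp_neg, Real.exp_log (by positivity), inv_div]
  -- continuity and boundedness facts
  have hcont : ∀ h' ∈ F, ContinuousOn (fun y => Φ h' (A y)) 𝒳 := by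
    intro h' hh'
    have hA' : Continuous A := A.continuous_of_finiteDimensional
    have hmap : Set.MapsTo (fun y => (h', A y)) 𝒳 (F ×ˢ M) := fun y hy => ⟨hh', hA y hy⟩
    exact hΦcont.comp ((continuous_const.prodMk hA')).continuousOn hmap
  have hGcont : Continuous fun y : Fin nX → ℝ => g ⬝ᵥ y + c := by
    have : Continuous fun y : Fin nX → ℝ => (∑ j, g j * y j) + c :=
      (continuous_finset_sum _ fun j _ => (continuous_const.mul (continuous_apply j))).add
        continuous_const
    exact this
  have hbdd1 : ∀ h' ∈ F, ∀ α : ℝ,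
      BddAbove ((fun y => α * Φ h' (A y) - (g ⬝ᵥ y + c)) '' 𝒳) := by
    intro h' hh' α
    exact h𝒳cpt.bddAbove_image
      (((continuousOn_const.mul (hcont h' hh')).sub hGcont.continuousOn))
  have hbdd2 : ∀ h' ∈ F, ∀ α : ℝ,
      BddAbove ((fun y => α * Φ h' (A y) + (g ⬝ᵥ y + c)) '' 𝒳) := by
    intro h' hh' α
    exact h𝒳cpt.bddAbove_image
      (((continuousOn_const.mul (hcont h' hh')).add hGcont.continuousOn))
  -- per-δ tail bounds
  have key₁ : ∀ δ : ℝ, 0 < δ →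
      μK {ω | (ρbar - κbar + G) + δ < fbar ⬝ᵥ ((K:ℝ)⁻¹ • ∑ i, ω i)}
        ≤ ENNReal.ofReal (ε/2) := by
    intro δ hδ
    obtain ⟨α0, hα0, hα0F⟩ := feas_exists hF0 fbar
    have hSne : {t : ℝ | ∃ α : ℝ, 0 < α ∧ α⁻¹ • fbar ∈ F ∧
        t = PsiPlus Φ A g c 𝒳 fbar α + α * ((K:ℝ)⁻¹ * L)}.Nonempty :=
      ⟨_, α0, hα0, hα0F, rfl⟩
    obtain ⟨t, ⟨α, hα, hαF, rfl⟩, ht⟩ := exists_mem_lt_of_sInf_le' hSne hδ hplus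
    have hPsi : α * Φ (α⁻¹ • fbar) (A x) - G ≤ PsiPlus Φ A g c 𝒳 fbar α :=
      le_csSup (hbdd1 _ hαF α) ⟨x, hx𝒳, rfl⟩
    have hCineq : α * Φ (α⁻¹ • fbar) (A x) + α * ((K:ℝ)⁻¹ * L)
        ≤ (ρbar - κbar + G) + δ := by linarith
    have := side_bound hK P fbar α (Φ (α⁻¹ • fbar) (A x)) L _ hα (hassoc _ hαF) hCineq
    exact le_of_le_of_eq this (by rw [hεhalf])
  have key₂ : ∀ δ : ℝ, 0 < δ →
      μK {ω | (ρbar + κbar - G) + δ < (-fbar) ⬝ᵥ ((K:ℝ)⁻¹ • ∑ i, ω i)}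
        ≤ ENNReal.ofReal (ε/2) := by
    intro δ hδ
    obtain ⟨β0, hβ0, hβ0F⟩ := feas_exists hF0 fbar
    have hSne : {t : ℝ | ∃ β : ℝ, 0 < β ∧ β⁻¹ • fbar ∈ F ∧
        t = PsiMinus Φ A g c 𝒳 fbar β + β * ((K:ℝ)⁻¹ * L)}.Nonempty :=
      ⟨_, β0, hβ0, hβ0F, rfl⟩
    obtain ⟨t, ⟨β, hβ, hβF, rfl⟩, ht⟩ := exists_mem_lt_of_sInf_le' hSne hδ hminus
    have hFneg : -(β⁻¹ • fbar) ∈ F := hFsymm _ hβF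
    have hPsi : β * Φ (-(β⁻¹ • fbar)) (A x) + G ≤ PsiMinus Φ A g c 𝒳 fbar β :=
      le_csSup (hbdd2 _ hFneg β) ⟨x, hx𝒳, rfl⟩
    have hCineq : β * Φ (-(β⁻¹ • fbar)) (A x) + β * ((K:ℝ)⁻¹ * L)
        ≤ (ρbar + κbar - G) + δ := by linarith
    have hi : ∫⁻ ω, ENNReal.ofReal (Real.exp ((β⁻¹ • (-fbar)) ⬝ᵥ ω)) ∂P
        ≤ ENNReal.ofReal (Real.exp (Φ (-(β⁻¹ • fbar)) (A x))) := by
      rw [smul_neg]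
      exact hassoc _ hFneg
    have := side_bound hK P (-fbar) β (Φ (-(β⁻¹ • fbar)) (A x)) L _ hβ hi hCineq
    exact le_of_le_of_eq this (by rw [hεhalf])
  -- from per-δ bounds to sharp-threshold bounds via countable unions
  have union₁ : ∀ (a : ℝ) (f' : Fin nF → ℝ),
      (∀ δ : ℝ, 0 < δ →
        μK {ω | a + δ < f' ⬝ᵥ ((K:ℝ)⁻¹ • ∑ i, ω i)} ≤ ENNReal.ofReal (ε/2)) →
      μK {ω | a < f' ⬝ᵥ ((K:ℝ)⁻¹ • ∑ i, ω i)} ≤ ENNReal.ofReal (ε/2) := by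
    intro a f' hbound
    have hU : {ω : Fin K → Fin nF → ℝ | a < f' ⬝ᵥ ((K:ℝ)⁻¹ • ∑ i, ω i)}
        = ⋃ n : ℕ, {ω | a + 1/((n:ℝ)+1) < f' ⬝ᵥ ((K:ℝ)⁻¹ • ∑ i, ω i)} := by
      ext ω
      simp only [Set.mem_setOf_eq, Set.mem_iUnion]
      constructor
      · intro hω
        obtain ⟨n, hn⟩ := exists_nat_one_div_lt (sub_pos.2 hω)
        exact ⟨n, by linarith⟩
      · rintro ⟨n, hn⟩
        have : 0 < 1/((n:ℝ)+1) := by positivity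
        linarith
    have hmono : Monotone fun n : ℕ =>
        {ω : Fin K → Fin nF → ℝ | a + 1/((n:ℝ)+1) < f' ⬝ᵥ ((K:ℝ)⁻¹ • ∑ i, ω i)} := by
      intro m n hmn ω hω
      simp only [Set.mem_setOf_eq] at hω ⊢
      have hc : ((m:ℝ)+1) ≤ ((n:ℝ)+1) := by
        have : (m:ℝ) ≤ n := Nat.cast_le.2 hmn
        linarith
      have : 1/((n:ℝ)+1) ≤ 1/((m:ℝ)+1) := one_div_le_one_div_of_le (by positivity) hc
      linarith
    rw [hU, hmono.directed_le.measure_iUnion]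
    exact iSup_le fun n => hbound _ (by positivity)
  -- split the two-sided event
  have hsplit : {ω : Fin K → Fin nF → ℝ | ρbar < |fbar ⬝ᵥ ((K:ℝ)⁻¹ • ∑ i, ω i) + κbar - G|}
      ⊆ {ω | (ρbar - κbar + G) < fbar ⬝ᵥ ((K:ℝ)⁻¹ • ∑ i, ω i)}
        ∪ {ω | (ρbar + κbar - G) < (-fbar) ⬝ᵥ ((K:ℝ)⁻¹ • ∑ i, ω i)} := by
    intro ω hω
    simp only [Set.mem_setOf_eq, Set.mem_union] at hω ⊢
    rcases lt_abs.1 hω with h | h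
    · left; linarith
    · right; rw [neg_dotProduct]; linarith
  calc μK {ω | ρbar < |fbar ⬝ᵥ ((K:ℝ)⁻¹ • ∑ i, ω i) + κbar - G|}
      ≤ μK ({ω | (ρbar - κbar + G) < fbar ⬝ᵥ ((K:ℝ)⁻¹ • ∑ i, ω i)}
          ∪ {ω | (ρbar + κbar - G) < (-fbar) ⬝ᵥ ((K:ℝ)⁻¹ • ∑ i, ω i)}) :=
        measure_mono hsplit
    _ ≤ μK {ω | (ρbar - κbar + G) < fbar ⬝ᵥ ((K:ℝ)⁻¹ • ∑ i, ω i)}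
        + μK {ω | (ρbar + κbar - G) < (-fbar) ⬝ᵥ ((K:ℝ)⁻¹ • ∑ i, ω i)} :=
        measure_union_le _ _
    _ ≤ ENNReal.ofReal (ε/2) + ENNReal.ofReal (ε/2) :=
        add_le_add (union₁ _ _ key₁) (union₁ _ _ key₂)
    _ = ENNReal.ofReal ε := by
        rw [← ENNReal.ofReal_add (by positivity) (by positivity)]
        norm_num

end
end
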